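/- arXiv:2410.15903 — 3 statements merged into one kernel-verified Lean document; each statement's English description precedes it below -/
import Mathlib

section
/- Let R be a commutative ring with ℚ ⊆ R and V an R-module. For φ ∈ Sym V and r ∈ ℕ, the projection onto symmetric degree r satisfies pr_{Sym^r V}(φ) = (1/r!) · pr_V(φ₍₁₎) ∨ ⋯ ∨ pr_V(φ₍ᵣ₎), where φ₍₁₎ ⊗ ⋯ ⊗ φ₍ᵣ₎ denotes the iterated shuffle coproduct and pr_V : Sym V → V the projection onto degree 1. -/
/-!
Both sides are linear in `φ` and the monomials `v₁ ⋯ vₛ` span `Sym V`, so it suffices to treat a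
monomial. The `vᵢ` are primitive, hence `Δ (v₁ ⋯ vₛ) = ∑_{T ⊆ [s]} v_T ⊗ v_{[s] ∖ T}`. Since
`pr_V` kills every `v_T` with `|T| ≠ 1`, the `r`-fold Sweedler product splits off one factor
`vᵢ` at a time: it vanishes unless `s = r`, and then it counts each of the `r!` orders of
splitting once, giving `r! · v₁ ⋯ vₛ`.
-/

open TensorProduct

inductive SymRel (R : Type*) [CommRing R] (V : Type*) [AddCommGroup V] [Module R V] :
    TensorAlgebra R V → TensorAlgebra R V → Prop
  | mul_comm (a b : TensorAlgebra R V) : SymRel R V (a * b) (b * a)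

/-- The symmetric algebra `Sym V` of an `R`-module `V`. -/
abbrev SymmAlg (R : Type*) [CommRing R] (V : Type*) [AddCommGroup V] [Module R V] : Type _ :=
  RingQuot (SymRel R V)

variable (R : Type*) [CommRing R] (V : Type*) [AddCommGroup V] [Module R V]

noncomputable instance : CommRing (SymmAlg R V) :=
  { (inferInstance : Ring (RingQuot (SymRel R V))) with
    mul_comm := by
      intro a b
      obtain ⟨x, rfl⟩ := RingQuot.mkRingHom_surjective (SymRel R V) a
      obtain ⟨y, rfl⟩ := RingQuot.mkRingHom_surjective (SymRel R V) b
      rw [← map_mul, ← map_mul, RingQuot.mkRingHom_rel (SymRel.mul_comm x y)] }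

noncomputable def ιS : V →ₗ[R] SymmAlg R V :=
  (RingQuot.mkAlgHom R (SymRel R V)).toLinearMap ∘ₗ TensorAlgebra.ι R

variable {R V}

/-- `sweedlerProd Δ p₁ p₀ r` is the map `φ ↦ p₁(φ₍₁₎) ∨ ⋯ ∨ p₁(φ₍ᵣ₎)` (with a trailing
counit factor `p₀(φ₍ᵣ₊₁₎)` which is harmless by counitality), defined by iterating the
coproduct `Δ`. -/
noncomputable def sweedlerProd {S : Type*} [CommRing S] [Algebra R S]
    (Δ : S →ₗ[R] S ⊗[R] S) (p₁ p₀ : S →ₗ[R] S) : ℕ → (S →ₗ[R] S)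
  | 0 => p₀
  | r + 1 => LinearMap.mul' R S ∘ₗ TensorProduct.map p₁ (sweedlerProd Δ p₁ p₀ r) ∘ₗ Δ

theorem Finset.prod_eq_prod_fin_equivFin {ι M : Type*} [CommMonoid M] (t : Finset ι)
    (f : ι → M) : ∏ j ∈ t, f j = ∏ i : Fin t.card, f (t.equivFin.symm i) := by
  rw [← Finset.prod_coe_sort, t.equivFin.symm.prod_comp (fun j : t => f j)]

section Primitive

variable {A : Type*} [CommRing A] [Algebra R A] {ι : Type*} [DecidableEq ι]

open Algebra.TensorProduct in
theorem comul_prod_of_primitive (Δ : A →ₐ[R] A ⊗[R] A) (a : ι → A)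
    (hΔ : ∀ j, Δ (a j) = 1 ⊗ₜ[R] a j + a j ⊗ₜ[R] 1) (u : Finset ι) :
    Δ (∏ j ∈ u, a j) = ∑ t ∈ u.powerset, (∏ j ∈ t, a j) ⊗ₜ[R] (∏ j ∈ u \ t, a j) := by
  have hsplit : ∀ j, Δ (a j) = includeLeft (S := R) (a j) + includeRight (a j) := fun j => by
    rw [hΔ, includeLeft_apply, includeRight_apply, add_comm]
  rw [map_prod, Finset.prod_congr rfl fun j _ => hsplit j, Finset.prod_add]
  refine Finset.sum_congr rfl fun t _ => ?_
  rw [← map_prod, ← map_prod, includeLeft_apply, includeRight_apply, tmul_mul_tmul, mul_one,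
    one_mul]

theorem sweedlerProd_succ_prod (Δ : A →ₐ[R] A ⊗[R] A) (a : ι → A)
    (hΔ : ∀ j, Δ (a j) = 1 ⊗ₜ[R] a j + a j ⊗ₜ[R] 1) {p₁ : A →ₗ[R] A} (p₀ : A →ₗ[R] A)
    (hp₁ : ∀ t : Finset ι, p₁ (∏ j ∈ t, a j) = if t.card = 1 then ∏ j ∈ t, a j else 0)
    (r : ℕ) (u : Finset ι) :
    sweedlerProd Δ.toLinearMap p₁ p₀ (r + 1) (∏ j ∈ u, a j) =
      ∑ i ∈ u, a i * sweedlerProd Δ.toLinearMap p₁ p₀ r (∏ j ∈ u.erase i, a j) := by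
  rw [sweedlerProd, LinearMap.comp_apply, LinearMap.comp_apply, AlgHom.toLinearMap_apply,
    comul_prod_of_primitive Δ a hΔ, map_sum, map_sum]
  simp only [TensorProduct.map_tmul, LinearMap.mul'_apply, hp₁, ite_mul, zero_mul]
  rw [← Finset.sum_filter, ← Finset.powersetCard_eq_filter, Finset.powersetCard_one,
    Finset.sum_map]
  simp only [Function.Embedding.coeFn_mk, Finset.prod_singleton, Finset.sdiff_singleton_eq_erase]

theorem sweedlerProd_prod_of_primitive (Δ : A →ₐ[R] A ⊗[R] A) (a : ι → A)
    (hΔ : ∀ j, Δ (a j) = 1 ⊗ₜ[R] a j + a j ⊗ₜ[R] 1) {p₁ p₀ : A →ₗ[R] A}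
    (hp₁ : ∀ t : Finset ι, p₁ (∏ j ∈ t, a j) = if t.card = 1 then ∏ j ∈ t, a j else 0)
    (hp₀ : ∀ t : Finset ι, p₀ (∏ j ∈ t, a j) = if t.card = 0 then ∏ j ∈ t, a j else 0)
    (r : ℕ) (u : Finset ι) :
    sweedlerProd Δ.toLinearMap p₁ p₀ r (∏ j ∈ u, a j) =
      if u.card = r then (r.factorial : R) • ∏ j ∈ u, a j else 0 := by
  induction r generalizing u with
  | zero => simpa [sweedlerProd] using hp₀ u
  | succ r ih =>
    simp only [sweedlerProd_succ_prod Δ a hΔ p₀ hp₁, ih]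
    by_cases hu : u.card = r + 1
    · have hterm : ∀ i ∈ u, a i * (if (u.erase i).card = r then
          (r.factorial : R) • ∏ j ∈ u.erase i, a j else 0) = (r.factorial : R) • ∏ j ∈ u, a j :=
        fun i hi => by
          rw [Finset.card_erase_of_mem hi, hu, Nat.add_sub_cancel, if_pos rfl, mul_smul_comm,
            Finset.mul_prod_erase u a hi]
      rw [Finset.sum_congr rfl hterm, Finset.sum_const, hu, if_pos rfl, ← Nat.cast_smul_eq_nsmul R,
        smul_smul, Nat.factorial_succ, Nat.cast_mul]
    · rw [if_neg hu]
      refine Finset.sum_eq_zero fun i hi => ?_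
      rw [Finset.card_erase_of_mem hi, if_neg (by have := Finset.card_pos.2 ⟨i, hi⟩; omega),
        mul_zero]

end Primitive

section Monomials

variable (R V)

def symMonomials : Submonoid (SymmAlg R V) where
  carrier := {φ | ∃ (s : ℕ) (x : Fin s → V), ∏ j, ιS R V (x j) = φ}
  mul_mem' := by
    rintro _ _ ⟨s, x, rfl⟩ ⟨t, y, rfl⟩
    exact ⟨s + t, Fin.append x y, by simp [Fin.prod_univ_add]⟩
  one_mem' := ⟨0, Fin.elim0, Fin.prod_univ_zero _⟩

theorem adjoin_range_ιS : Algebra.adjoin R (Set.range (ιS R V)) = ⊤ := by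
  rw [ιS, LinearMap.coe_comp, Set.range_comp, AlgHom.coe_toLinearMap, ← AlgHom.map_adjoin,
    TensorAlgebra.adjoin_range_ι, Algebra.map_top, AlgHom.range_eq_top]
  exact RingQuot.mkAlgHom_surjective R (SymRel R V)

theorem span_symMonomials : Submodule.span R (symMonomials R V : Set (SymmAlg R V)) = ⊤ := by
  have hadjoin : Algebra.adjoin R (symMonomials R V : Set (SymmAlg R V)) = ⊤ :=
    top_unique <| adjoin_range_ιS R V ▸ Algebra.adjoin_mono
      (by rintro _ ⟨v, rfl⟩; exact ⟨1, fun _ => v, Fin.prod_univ_one _⟩)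
  rw [← Submonoid.closure_eq (symMonomials R V), ← Algebra.adjoin_eq_span, hadjoin,
    Algebra.top_toSubmodule]

end Monomials

/-- **Projections onto symmetric degree via the shuffle coproduct.**
Let `Δ` be the shuffle coproduct of `Sym V` and `P r` the canonical projection onto
the homogeneous component `Sym^r V` (characterized by its values on products of
generators).  Then for every `φ ∈ Sym V`,
`pr_{Sym^r V}(φ) = (1/r!) · pr_V(φ₍₁₎) ∨ ⋯ ∨ pr_V(φ₍ᵣ₎)`,
where the right-hand side is the `r`-fold iterated Sweedler product of the degree-one
projections (`P 1` realises `pr_V` inside `Sym V`, and the trailing factor `P 0` is the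
counit, which disappears by counitality). -/
theorem proj_symPow_eq_sweedler
    {R : Type*} [CommRing R] [Algebra ℚ R]
    {V : Type*} [AddCommGroup V] [Module R V]
    (Δ : SymmAlg R V →ₐ[R] SymmAlg R V ⊗[R] SymmAlg R V)
    (hΔ : ∀ v : V, Δ (ιS R V v) = 1 ⊗ₜ[R] ιS R V v + ιS R V v ⊗ₜ[R] 1)
    (P : ℕ → (SymmAlg R V →ₗ[R] SymmAlg R V))
    (hP : ∀ (r s : ℕ) (x : Fin s → V),
      P r (∏ j, ιS R V (x j)) = if s = r then ∏ j, ιS R V (x j) else 0)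
    (r : ℕ) (φ : SymmAlg R V) :
    P r φ = algebraMap ℚ R ((r.factorial : ℚ)⁻¹) •
      sweedlerProd Δ.toLinearMap (P 1) (P 0) r φ := by
  classical
  have hP_finset : ∀ k {s} (x : Fin s → V) (t : Finset (Fin s)),
      P k (∏ j ∈ t, ιS R V (x j)) = if t.card = k then ∏ j ∈ t, ιS R V (x j) else 0 := by
    intro k s x t
    rw [Finset.prod_eq_prod_fin_equivFin t, hP]
  have hmonomial : ∀ {s} (x : Fin s → V), P r (∏ j, ιS R V (x j)) =
      algebraMap ℚ R ((r.factorial : ℚ)⁻¹) •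
        sweedlerProd Δ.toLinearMap (P 1) (P 0) r (∏ j, ιS R V (x j)) := by
    intro s x
    rw [hP, sweedlerProd_prod_of_primitive Δ _ (fun j => hΔ (x j)) (hP_finset 1 x)
      (hP_finset 0 x), Finset.card_univ, Fintype.card_fin]
    split_ifs
    · rw [smul_smul, ← map_natCast (algebraMap ℚ R), ← map_mul,
        inv_mul_cancel₀ (by positivity), map_one, one_smul]
    · rw [smul_zero]
  have hmaps : P r = algebraMap ℚ R ((r.factorial : ℚ)⁻¹) •
      sweedlerProd Δ.toLinearMap (P 1) (P 0) r :=
    LinearMap.ext_on (span_symMonomials R V) (by rintro _ ⟨s, x, rfl⟩; exact hmonomial x)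
  exact LinearMap.congr_fun hmaps φ
end

section
/- In the van Est double complex, define k : D_vE^{k,ℓ}(V) → D_vE^{k,ℓ−1}(V) on X ⊗ φ ⊗ ξ with φ ∈ Sym^r V, ξ ∈ Λ^ℓ V by k(X ⊗ φ ⊗ ξ) = ((−1)^k/(r+ℓ)) · X ⊗ (φ ∨ pr_V(ξ₍₋₁₎)) ⊗ ξ₍₀₎ (and zero when r = ℓ = 0), together with j(X) = X ⊗ 1 ⊗ 1 and q(X ⊗ φ ⊗ ξ) = ε(φ)ε(ξ)·X. Then (j, q, k) is a special deformation retract for the horizontal differential ∂: one has q j = id, ∂ k + k ∂ = id − j q, and additionally k² = 0, q k = 0, k j = 0. -/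
open TensorProduct

variable (R : Type*) [CommRing R] (V : Type*) [AddCommGroup V] [Module R V]

/-! ### Tensor powers and the coalgebra differential -/

open scoped TensorProduct

section Tpow

variable (R : Type*) [CommRing R] (S : Type*) [AddCommGroup S] [Module R S]

/-- The `k`-th tensor power `T^k S` of an `R`-module `S`. -/
abbrev Tpow (k : ℕ) : Type _ := PiTensorProduct R (fun _ : Fin k => S)

/-- Concatenation of tensor powers, `T^a S ⊗ T^b S →ₗ T^(a+b) S`:
the tensor multiplication of the tensor algebra. -/
noncomputable def concat (a b : ℕ) : Tpow R S a ⊗[R] Tpow R S b →ₗ[R] Tpow R S (a + b) :=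
  (PiTensorProduct.reindex R (fun _ : Fin a ⊕ Fin b => S) finSumFinEquiv).toLinearMap ∘ₗ
    (PiTensorProduct.tmulEquiv R S).toLinearMap

/-- The canonical identification `S ≃ T^1 S`. -/
noncomputable def toT1 : S ≃ₗ[R] Tpow R S 1 :=
  (PiTensorProduct.subsingletonEquiv (R := R) (s := fun _ : Fin 1 => S) (0 : Fin 1)).symm

/-- The canonical identification `T^(k+1) S ≃ T^k S ⊗ S` splitting off the last factor. -/
noncomputable def unsnoc (k : ℕ) : Tpow R S (k + 1) ≃ₗ[R] Tpow R S k ⊗[R] S :=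
  ((PiTensorProduct.reindex R (fun _ : Fin (k + 1) => S) finSumFinEquiv.symm).trans
      (PiTensorProduct.tmulEquiv R S).symm).trans
    (TensorProduct.congr (LinearEquiv.refl R _) (toT1 R S).symm)

/-- The canonical identification `S ⊗ S ≃ T^2 S`. -/
noncomputable def toT2 : S ⊗[R] S →ₗ[R] Tpow R S 2 :=
  concat R S 1 1 ∘ₗ TensorProduct.map (toT1 R S).toLinearMap (toT1 R S).toLinearMap

/-- The identification `T^a S ≃ T^b S` for `a = b`. -/
noncomputable def tcast {a b : ℕ} (h : a = b) : Tpow R S a ≃ₗ[R] Tpow R S b :=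
  PiTensorProduct.reindex R (fun _ : Fin a => S) (finCongr h)

variable {S} in
/-- The coalgebra differential `δ_ca : T^k S → T^(k+1) S` obtained by extending
`−Δ̄ : S → S ⊗ S ≃ T² S` (for a given reduced coproduct `Δ̄ = Db`) as a graded
derivation with respect to the tensor product, i.e.
`δ_ca = ∑_{i=1}^k (−1)^i (id^{⊗(i−1)} ⊗ Δ̄ ⊗ id^{⊗(k−i)})`, here realized through the
recursion `δ_ca(X ⊗ φ) = δ_ca(X) ⊗ φ + (−1)^k X ⊗ (−Δ̄ φ)` for `X ∈ T^k S`, `φ ∈ S`. -/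
noncomputable def deltaCa (Db : S →ₗ[R] S ⊗[R] S) : (k : ℕ) → Tpow R S k →ₗ[R] Tpow R S (k + 1)
  | 0 => 0
  | (k + 1) =>
      (concat R S (k + 1) 1 ∘ₗ TensorProduct.map (deltaCa Db k) (toT1 R S).toLinearMap
        + ((-1 : ℤ) ^ k) •
          (concat R S k 2 ∘ₗ TensorProduct.map LinearMap.id (toT2 R S ∘ₗ (-Db))))
        ∘ₗ (unsnoc R S (k + 1 - 1)).toLinearMap

end Tpow

section Comodule

variable {R : Type*} [CommRing R] {S : Type*} [AddCommGroup S] [Module R S]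
variable {M : Type*} [AddCommGroup M] [Module R M]

/-- The coalgebra differential with coefficients in a comodule `M` with coaction `L`:
`δ_M(X ⊗ m) = δ_ca(X) ⊗ m + (−1)^(k+1) (X ⊗ pr₊(m₍₋₁₎)) ⊗ m₍₀₎` for `X ∈ T^k S`,
where `Db` is the reduced coproduct defining `δ_ca` and `prP` is the projection
`pr₊` onto positive degrees. -/
noncomputable def deltaMod (Db : S →ₗ[R] S ⊗[R] S) (prP : S →ₗ[R] S)
    (L : M →ₗ[R] S ⊗[R] M) (k : ℕ) :
    Tpow R S k ⊗[R] M →ₗ[R] Tpow R S (k + 1) ⊗[R] M :=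
  TensorProduct.map (deltaCa R Db k) LinearMap.id
    + ((-1 : ℤ) ^ (k + 1)) •
      (TensorProduct.map
          (concat R S k 1 ∘ₗ TensorProduct.map LinearMap.id ((toT1 R S).toLinearMap ∘ₗ prP))
          LinearMap.id
        ∘ₗ (TensorProduct.assoc R (Tpow R S k) S M).symm.toLinearMap
        ∘ₗ TensorProduct.map LinearMap.id L)

end Comodule

section CE

variable {R : Type*} [CommRing R] {V : Type*} [AddCommGroup V] [Module R V]

/-- The Chevalley-Eilenberg differential `∂` on `Sym V ⊗ Λ V`:
`∂(x₁ ∨ ⋯ ∨ x_r ⊗ ξ) = ∑ᵢ x₁ ∨ ⋯ x̂ᵢ ⋯ ∨ x_r ⊗ (xᵢ ∧ ξ)`, the unique degree-`+1`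
graded derivation with `∂(x ⊗ 1) = 1 ⊗ x` and `∂(1 ⊗ x) = 0`.  It is expressed via the
shuffle coproduct `Δ` and the degree-one projection `prV` of `Sym V`. -/
noncomputable def ceD (Δ : SymmAlg R V →ₗ[R] SymmAlg R V ⊗[R] SymmAlg R V)
    (prV : SymmAlg R V →ₗ[R] V) :
    SymmAlg R V ⊗[R] ExteriorAlgebra R V →ₗ[R] SymmAlg R V ⊗[R] ExteriorAlgebra R V :=
  TensorProduct.map LinearMap.id
      (LinearMap.mul' R (ExteriorAlgebra R V)
        ∘ₗ TensorProduct.map (ExteriorAlgebra.ι R) LinearMap.id)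
    ∘ₗ (TensorProduct.assoc R (SymmAlg R V) V (ExteriorAlgebra R V)).toLinearMap
    ∘ₗ TensorProduct.map (TensorProduct.map LinearMap.id prV ∘ₗ Δ) LinearMap.id

/-- The codifferential `∂*` on `Sym V ⊗ Λ V`:
`∂*(φ ⊗ ξ₁ ∧ ⋯ ∧ ξ_ℓ) = ∑ᵢ (−1)^(i+1) φ ∨ ξᵢ ⊗ ξ₁ ∧ ⋯ ξ̂ᵢ ⋯ ∧ ξ_ℓ`, the degree-`−1`
graded derivation with `∂*(x ⊗ 1) = 0` and `∂*(1 ⊗ x) = x ⊗ 1`.  It is expressed via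
the degree-one component `ρΛ : Λ V → V ⊗ Λ V` of the graded shuffle coproduct. -/
noncomputable def ceDstar (ρΛ : ExteriorAlgebra R V →ₗ[R] V ⊗[R] ExteriorAlgebra R V) :
    SymmAlg R V ⊗[R] ExteriorAlgebra R V →ₗ[R] SymmAlg R V ⊗[R] ExteriorAlgebra R V :=
  TensorProduct.map (LinearMap.mul' R (SymmAlg R V) ∘ₗ TensorProduct.map LinearMap.id (ιS R V))
      LinearMap.id
    ∘ₗ (TensorProduct.assoc R (SymmAlg R V) V (ExteriorAlgebra R V)).symm.toLinearMap
    ∘ₗ TensorProduct.map LinearMap.id ρΛ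

end CE

/-! ### The van Est double complex -/

section VanEst

variable {R : Type*} [CommRing R] {V : Type*} [AddCommGroup V] [Module R V]

/-- Shorthand for `Sym V`. -/
local notation "S" => SymmAlg R V
/-- Shorthand for `Λ V`. -/
local notation "Λ" => ExteriorAlgebra R V

/-- The `(k, •)`-column `T^k(Sym V) ⊗ Sym V ⊗ Λ V` of the van Est double complex. -/
abbrev DvE (R : Type*) [CommRing R] (V : Type*) [AddCommGroup V] [Module R V] (k : ℕ) :=
  Tpow R (SymmAlg R V) k ⊗[R] (SymmAlg R V ⊗[R] ExteriorAlgebra R V)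

/-- The total module of the van Est double complex. -/
abbrev DvETot (R : Type*) [CommRing R] (V : Type*) [AddCommGroup V] [Module R V] :=
  DirectSum ℕ (fun k => DvE R V k)

/-- The vertical differential `δ` of the van Est double complex,
`δ(X ⊗ φ ⊗ ξ) = δ_ca(X) ⊗ φ ⊗ ξ + (−1)^(k+1)(X ⊗ pr₊(φ₍₁₎)) ⊗ φ₍₂₎ ⊗ ξ`,
assembled on the total complex.  Here `Db` is the reduced shuffle coproduct (defining
`δ_ca`), `prP = pr₊`, and `Δ` the shuffle coproduct. -/
noncomputable def vertTot (Db : S →ₗ[R] S ⊗[R] S) (prP : S →ₗ[R] S) (Δ : S →ₗ[R] S ⊗[R] S) :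
    DvETot R V →ₗ[R] DvETot R V :=
  DirectSum.toModule R ℕ _ fun k =>
    DirectSum.lof R ℕ (fun k => DvE R V k) (k + 1) ∘ₗ
      deltaMod Db prP
        ((TensorProduct.assoc R S S Λ).toLinearMap ∘ₗ TensorProduct.map Δ LinearMap.id) k

/-- The horizontal differential `∂` of the van Est double complex,
`∂(X ⊗ φ ⊗ ξ) = (−1)^k X ⊗ φ₍₀₎ ⊗ (pr_V(φ₍₁₎) ∧ ξ)`, assembled on the total complex. -/
noncomputable def horizTot (Δ : S →ₗ[R] S ⊗[R] S) (prV : S →ₗ[R] V) :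
    DvETot R V →ₗ[R] DvETot R V :=
  DirectSum.toModule R ℕ _ fun k =>
    DirectSum.lof R ℕ (fun k => DvE R V k) k ∘ₗ
      (((-1 : ℤ) ^ k) • TensorProduct.map LinearMap.id (ceD Δ prV))

/-- The counit of `T^k(Sym V)` : the tensor power of the counit `ε`. -/
noncomputable def epsT (ε : S →ₗ[R] R) (k : ℕ) : Tpow R (SymmAlg R V) k →ₗ[R] R :=
  PiTensorProduct.lift ((MultilinearMap.mkPiAlgebra R (Fin k) R).compLinearMap fun _ => ε)

/-- `ε ⊗ id : Sym V ⊗ Λ V →ₗ Λ V`. -/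
noncomputable def epsSL (ε : S →ₗ[R] R) : S ⊗[R] Λ →ₗ[R] Λ :=
  (TensorProduct.lid R Λ).toLinearMap ∘ₗ TensorProduct.map ε LinearMap.id

/-- The augmentation `p(X ⊗ φ ⊗ ξ) = ε(X) ε(φ) ξ` of the van Est double complex. -/
noncomputable def pAug (ε : S →ₗ[R] R) : DvETot R V →ₗ[R] Λ :=
  DirectSum.toModule R ℕ _ fun k =>
    (TensorProduct.lid R Λ).toLinearMap ∘ₗ TensorProduct.map (epsT ε k) (epsSL ε)

/-- The empty tensor `1 ∈ T⁰`. -/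
noncomputable def tunit : Tpow R (SymmAlg R V) 0 :=
  (PiTensorProduct.isEmptyEquiv (Fin 0)).symm (1 : R)

/-- The inclusion `i(ξ) = 1 ⊗ 1 ⊗ ξ` into the van Est double complex. -/
noncomputable def iAug : Λ →ₗ[R] DvETot R V :=
  DirectSum.lof R ℕ (fun k => DvE R V k) 0 ∘ₗ
    TensorProduct.mk R (Tpow R (SymmAlg R V) 0) (S ⊗[R] Λ) tunit ∘ₗ
      TensorProduct.mk R S Λ 1

/-- The vertical homotopy
`h((X₁ ⊗ ⋯ ⊗ X_k) ⊗ φ ⊗ ξ) = (−1)^k ε(φ) (X₁ ⊗ ⋯ ⊗ X_(k−1)) ⊗ X_k ⊗ ξ`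
(vanishing in column `k = 0`), assembled on the total complex. -/
noncomputable def hAug (ε : S →ₗ[R] R) : DvETot R V →ₗ[R] DvETot R V :=
  DirectSum.toModule R ℕ _ fun k =>
    match k with
    | 0 => 0
    | (k + 1) =>
      DirectSum.lof R ℕ (fun k => DvE R V k) k ∘ₗ
        (((-1 : ℤ) ^ (k + 1)) •
          ((TensorProduct.assoc R (Tpow R (SymmAlg R V) k) S Λ).toLinearMap ∘ₗ
            TensorProduct.map (unsnoc R S k).toLinearMap (epsSL ε)))

end VanEst

section RowRetract

variable {R : Type*} [CommRing R] {V : Type*} [AddCommGroup V] [Module R V]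

/-- The total module `⨁ₖ T^k(Sym V)` of the coalgebra complex. -/
abbrev TcaTot (R : Type*) [CommRing R] (V : Type*) [AddCommGroup V] [Module R V] :=
  DirectSum ℕ (fun k => Tpow R (SymmAlg R V) k)

/-- The row inclusion `j(X) = X ⊗ 1 ⊗ 1` of the van Est double complex. -/
noncomputable def jAug : TcaTot R V →ₗ[R] DvETot R V :=
  DirectSum.toModule R ℕ _ fun k =>
    DirectSum.lof R ℕ (fun k => DvE R V k) k ∘ₗ
      (TensorProduct.mk R (Tpow R (SymmAlg R V) k)
        (SymmAlg R V ⊗[R] ExteriorAlgebra R V)).flip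
        ((1 : SymmAlg R V) ⊗ₜ[R] (1 : ExteriorAlgebra R V))

/-- The row projection `q(X ⊗ φ ⊗ ξ) = ε(φ) ε(ξ) X` of the van Est double complex,
where `εΛ` is the counit of `Λ V`. -/
noncomputable def qAug (ε : SymmAlg R V →ₗ[R] R) (εΛ : ExteriorAlgebra R V →ₗ[R] R) :
    DvETot R V →ₗ[R] TcaTot R V :=
  DirectSum.toModule R ℕ _ fun k =>
    DirectSum.lof R ℕ (fun k => Tpow R (SymmAlg R V) k) k ∘ₗ
      (TensorProduct.rid R (Tpow R (SymmAlg R V) k)).toLinearMap ∘ₗ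
        TensorProduct.map LinearMap.id (LinearMap.mul' R R ∘ₗ TensorProduct.map ε εΛ)

/-- The map `φ ⊗ ξ ↦ (φ ∨ pr_V(ξ₍₋₁₎)) ⊗ ξ₍₀₎` on `Sym V ⊗ Λ V`, where
`ρΛ(ξ) = ξ₍₋₁₎ ⊗ ξ₍₀₎ ∈ V ⊗ Λ V` is the degree-one component of the graded shuffle
coproduct of `Λ V`. -/
noncomputable def kInner (ρΛ : ExteriorAlgebra R V →ₗ[R] V ⊗[R] ExteriorAlgebra R V) :
    SymmAlg R V ⊗[R] ExteriorAlgebra R V →ₗ[R] SymmAlg R V ⊗[R] ExteriorAlgebra R V :=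
  TensorProduct.map
      (LinearMap.mul' R (SymmAlg R V) ∘ₗ TensorProduct.map LinearMap.id (ιS R V))
      LinearMap.id
    ∘ₗ (TensorProduct.assoc R (SymmAlg R V) V (ExteriorAlgebra R V)).symm.toLinearMap
    ∘ₗ TensorProduct.map LinearMap.id ρΛ

end RowRetract

-- ext lemma for alg homs out of SymmAlg
theorem SymmAlg.hom_ext {A : Type*} [Ring A] [Algebra R A] {f g : SymmAlg R V →ₐ[R] A}
    (h : ∀ v, f (ιS R V v) = g (ιS R V v)) : f = g := by
  have : f.comp (RingQuot.mkAlgHom R (SymRel R V)) = g.comp (RingQuot.mkAlgHom R (SymRel R V)) := by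
    apply TensorAlgebra.hom_ext
    ext v
    simpa [ιS] using h v
  refine AlgHom.ext fun x => ?_
  obtain ⟨y, rfl⟩ := RingQuot.mkAlgHom_surjective R (SymRel R V) x
  exact DFunLike.congr_fun this y

-- induction principle for SymmAlg
theorem SymmAlg.induction {C : SymmAlg R V → Prop}
    (algebraMap : ∀ r : R, C (algebraMap R (SymmAlg R V) r))
    (gen : ∀ v, C (ιS R V v))
    (mul : ∀ a b, C a → C b → C (a * b))
    (add : ∀ a b, C a → C b → C (a + b)) : ∀ a, C a := by
  intro a
  obtain ⟨y, rfl⟩ := RingQuot.mkAlgHom_surjective R (SymRel R V) a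
  induction y using TensorAlgebra.induction with
  | algebraMap r => rw [AlgHom.commutes]; exact algebraMap r
  | ι v => exact gen v
  | mul a b ha hb => rw [map_mul]; exact mul _ _ ha hb
  | add a b ha hb => rw [map_add]; exact add _ _ ha hb

section Aux2
variable {R : Type*} [CommRing R] {V : Type*} [AddCommGroup V] [Module R V]

theorem gen_sym (φ : SymmAlg R V) :
    φ ∈ ⨆ r : ℕ, (LinearMap.range (ιS R V) ^ r : Submodule R (SymmAlg R V)) := by
  induction φ using SymmAlg.induction with
  | algebraMap r =>
    exact Submodule.mem_iSup_of_mem 0 (by rw [pow_zero]; exact Submodule.algebraMap_mem r)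
  | gen v => exact Submodule.mem_iSup_of_mem 1 (by rw [pow_one]; exact ⟨v, rfl⟩)
  | add a b ha hb => exact add_mem ha hb
  | mul a b ha hb =>
    induction ha using Submodule.iSup_induction' with
    | mem i x hx =>
      induction hb using Submodule.iSup_induction' with
      | mem j z hz =>
        exact Submodule.mem_iSup_of_mem (i + j)
          (by rw [pow_add]; exact Submodule.mul_mem_mul hx hz)
      | zero => rw [mul_zero]; exact zero_mem _
      | add z w hz hw hz' hw' => rw [mul_add]; exact add_mem hz' hw'
    | zero => rw [zero_mul]; exact zero_mem _
    | add z w hz hw hz' hw' => rw [add_mul]; exact add_mem hz' hw'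

theorem gen_ext (ξ : ExteriorAlgebra R V) :
    ξ ∈ ⨆ ℓ : ℕ,
      (LinearMap.range (ExteriorAlgebra.ι R (M := V)) ^ ℓ :
        Submodule R (ExteriorAlgebra R V)) := by
  induction ξ using ExteriorAlgebra.induction with
  | algebraMap r =>
    exact Submodule.mem_iSup_of_mem 0 (by rw [pow_zero]; exact Submodule.algebraMap_mem r)
  | ι v => exact Submodule.mem_iSup_of_mem 1 (by rw [pow_one]; exact ⟨v, rfl⟩)
  | add a b ha hb => exact add_mem ha hb
  | mul a b ha hb =>
    induction ha using Submodule.iSup_induction' with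
    | mem i x hx =>
      induction hb using Submodule.iSup_induction' with
      | mem j z hz =>
        exact Submodule.mem_iSup_of_mem (i + j)
          (by rw [pow_add]; exact Submodule.mul_mem_mul hx hz)
      | zero => rw [mul_zero]; exact zero_mem _
      | add z w hz hw hz' hw' => rw [mul_add]; exact add_mem hz' hw'
    | zero => rw [zero_mul]; exact zero_mem _
    | add z w hz hw hz' hw' => rw [add_mul]; exact add_mem hz' hw'

theorem eps_pow (ε : SymmAlg R V →ₐ[R] R) (hε : ∀ v, ε (ιS R V v) = 0) (r : ℕ)
    (φ : SymmAlg R V) (h : φ ∈ (LinearMap.range (ιS R V) ^ (r + 1) : Submodule R _)) :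
    ε φ = 0 := by
  rw [pow_succ] at h
  refine Submodule.mul_induction_on h (fun m _ n hn => ?_)
    (fun x y hx hy => by rw [map_add, hx, hy, add_zero])
  obtain ⟨v, rfl⟩ := hn
  rw [map_mul, hε, mul_zero]

theorem epsL_ι (v : V) : ExteriorAlgebra.algebraMapInv (ExteriorAlgebra.ι R v) = 0 := by
  simp [ExteriorAlgebra.algebraMapInv]

theorem epsL_pow (ℓ : ℕ) (ξ : ExteriorAlgebra R V)
    (h : ξ ∈ (LinearMap.range (ExteriorAlgebra.ι R (M := V)) ^ (ℓ + 1) : Submodule R _)) :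
    ExteriorAlgebra.algebraMapInv (R := R) (M := V) ξ = 0 := by
  rw [pow_succ] at h
  refine Submodule.mul_induction_on h (fun m _ n hn => ?_)
    (fun x y hx hy => by rw [map_add, hx, hy, add_zero])
  obtain ⟨v, rfl⟩ := hn
  rw [map_mul, epsL_ι, mul_zero]

/-- every element of `SymmAlg` is a linear combination of monomials. -/
theorem mem_mon_span (φ : SymmAlg R V) :
    φ ∈ Submodule.span R {m : SymmAlg R V | ∃ (s : ℕ) (x : Fin s → V), m = ∏ j, ιS R V (x j)} := by
  induction φ using SymmAlg.induction with
  | algebraMap r =>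
    rw [Algebra.algebraMap_eq_smul_one]
    exact Submodule.smul_mem _ _ (Submodule.subset_span ⟨0, fun i => i.elim0, by simp⟩)
  | gen v => exact Submodule.subset_span ⟨1, fun _ => v, by simp⟩
  | add a b ha hb => exact add_mem ha hb
  | mul a b ha hb =>
    induction ha using Submodule.span_induction with
    | mem m hm =>
      obtain ⟨s, x, rfl⟩ := hm
      induction hb using Submodule.span_induction with
      | mem n hn =>
        obtain ⟨t, y, rfl⟩ := hn
        refine Submodule.subset_span ⟨s + t, Fin.append x y, ?_⟩
        rw [Fin.prod_univ_add]
        simp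
      | zero => rw [mul_zero]; exact zero_mem _
      | add z w hz hw hz' hw' => rw [mul_add]; exact add_mem hz' hw'
      | smul c z hz hz' => rw [mul_smul_comm]; exact Submodule.smul_mem _ _ hz'
    | zero => rw [zero_mul]; exact zero_mem _
    | add z w hz hw hz' hw' => rw [add_mul]; exact add_mem hz' hw'
    | smul c z hz hz' => rw [smul_mul_assoc]; exact Submodule.smul_mem _ _ hz'

theorem prV_one (prV : SymmAlg R V →ₗ[R] V)
    (hprV0 : ∀ (s : ℕ) (x : Fin s → V), s ≠ 1 → prV (∏ j, ιS R V (x j)) = 0) :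
    prV 1 = 0 := by
  simpa using hprV0 0 (fun i => i.elim0) (by simp)

theorem prV_mul_gen (ε : SymmAlg R V →ₐ[R] R) (hε : ∀ v, ε (ιS R V v) = 0)
    (prV : SymmAlg R V →ₗ[R] V)
    (hprV1 : ∀ v : V, prV (ιS R V v) = v)
    (hprV0 : ∀ (s : ℕ) (x : Fin s → V), s ≠ 1 → prV (∏ j, ιS R V (x j)) = 0)
    (ψ : SymmAlg R V) (v : V) : prV (ψ * ιS R V v) = ε ψ • v := by
  induction mem_mon_span ψ using Submodule.span_induction with
  | mem m hm =>
    obtain ⟨s, x, rfl⟩ := hm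
    cases s with
    | zero => simp [hprV1]
    | succ s =>
      have h1 : (∏ j : Fin (s + 1), ιS R V (x j)) * ιS R V v
          = ∏ j : Fin (s + 2), ιS R V ((Fin.snoc x v : Fin (s + 2) → V) j) := by
        rw [Fin.prod_univ_castSucc (n := s + 1)]
        simp
      have h2 : ε (∏ j : Fin (s + 1), ιS R V (x j)) = 0 := by
        rw [map_prod]
        exact Finset.prod_eq_zero (Finset.mem_univ 0) (hε _)
      rw [h1, hprV0 (s + 2) _ (by omega), h2, zero_smul]
  | zero => simp
  | add z w hz hw hz' hw' => rw [add_mul, map_add, hz', hw', map_add, add_smul]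
  | smul c z hz hz' => rw [smul_mul_assoc, map_smul, hz', map_smul, smul_assoc]

end Aux2


set_option maxHeartbeats 1000000
set_option synthInstance.maxHeartbeats 400000

section Aux3
variable {R : Type*} [CommRing R] {V : Type*} [AddCommGroup V] [Module R V]
variable (Δ : SymmAlg R V →ₐ[R] SymmAlg R V ⊗[R] SymmAlg R V)
variable (ε : SymmAlg R V →ₐ[R] R)
variable (prV : SymmAlg R V →ₗ[R] V)
variable (ρΛ : ExteriorAlgebra R V →ₗ[R] V ⊗[R] ExteriorAlgebra R V)

/-- right multiplication by a generator on the `Sym` factor. -/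
noncomputable def Mv (v : V) :
    SymmAlg R V ⊗[R] ExteriorAlgebra R V →ₗ[R] SymmAlg R V ⊗[R] ExteriorAlgebra R V :=
  TensorProduct.map (LinearMap.mulRight R (ιS R V v)) LinearMap.id

/-- left multiplication by a generator on the `Λ` factor. -/
noncomputable def Lv (v : V) :
    SymmAlg R V ⊗[R] ExteriorAlgebra R V →ₗ[R] SymmAlg R V ⊗[R] ExteriorAlgebra R V :=
  TensorProduct.map LinearMap.id (LinearMap.mulLeft R (ExteriorAlgebra.ι R v))

@[simp] theorem Mv_tmul (v : V) (φ : SymmAlg R V) (ξ : ExteriorAlgebra R V) :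
    Mv v (φ ⊗ₜ[R] ξ) = (φ * ιS R V v) ⊗ₜ[R] ξ := rfl

@[simp] theorem Lv_tmul (v : V) (φ : SymmAlg R V) (ξ : ExteriorAlgebra R V) :
    Lv v (φ ⊗ₜ[R] ξ) = φ ⊗ₜ[R] (ExteriorAlgebra.ι R v * ξ) := rfl

theorem ceD_tmul (φ : SymmAlg R V) (ξ : ExteriorAlgebra R V) :
    ceD Δ.toLinearMap prV (φ ⊗ₜ[R] ξ)
      = (TensorProduct.map LinearMap.id
          (LinearMap.mul' R (ExteriorAlgebra R V)
            ∘ₗ TensorProduct.map (ExteriorAlgebra.ι R) LinearMap.id))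
        ((TensorProduct.assoc R _ _ _)
          (((TensorProduct.map LinearMap.id prV) (Δ φ)) ⊗ₜ[R] ξ)) := by
  simp [ceD]

theorem kInner_tmul (φ : SymmAlg R V) (ξ : ExteriorAlgebra R V) :
    kInner ρΛ (φ ⊗ₜ[R] ξ)
      = (TensorProduct.map
          (LinearMap.mul' R (SymmAlg R V) ∘ₗ TensorProduct.map LinearMap.id (ιS R V))
          LinearMap.id)
        ((TensorProduct.assoc R _ _ _).symm (φ ⊗ₜ[R] ρΛ ξ)) := by
  simp [kInner]

variable (hΔ : ∀ v : V, Δ (ιS R V v) = 1 ⊗ₜ[R] ιS R V v + ιS R V v ⊗ₜ[R] 1)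
variable (hε : ∀ v : V, ε (ιS R V v) = 0)
variable (hprV1 : ∀ v : V, prV (ιS R V v) = v)
variable (hprV0 : ∀ (s : ℕ) (x : Fin s → V), s ≠ 1 → prV (∏ j, ιS R V (x j)) = 0)
variable (hρΛ1 : ρΛ 1 = 0)
variable (hρΛ : ∀ (v : V) (ξ : ExteriorAlgebra R V),
      ρΛ (ExteriorAlgebra.ι R v * ξ)
        = v ⊗ₜ[R] ξ
          - TensorProduct.map LinearMap.id (LinearMap.mulLeft R (ExteriorAlgebra.ι R v)) (ρΛ ξ))

include hΔ hε in
theorem counit_right (φ : SymmAlg R V) :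
    (TensorProduct.rid R (SymmAlg R V))
      ((TensorProduct.map LinearMap.id ε.toLinearMap) (Δ φ)) = φ := by
  have hE : ((Algebra.TensorProduct.rid R R (SymmAlg R V)).toAlgHom.comp
      ((Algebra.TensorProduct.map (AlgHom.id R (SymmAlg R V)) ε).comp Δ)) = AlgHom.id R _ := by
    apply SymmAlg.hom_ext
    intro v
    simp [hΔ v, hε v]
  have h2 : ∀ z : SymmAlg R V ⊗[R] SymmAlg R V,
      (TensorProduct.rid R _) ((TensorProduct.map LinearMap.id ε.toLinearMap) z)
        = (Algebra.TensorProduct.rid R R _) ((Algebra.TensorProduct.map (AlgHom.id R _) ε) z) := by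
    intro z
    induction z using TensorProduct.induction_on with
    | zero => simp
    | tmul a b => simp
    | add a b ha hb => simp only [map_add, ha, hb]
  have := DFunLike.congr_fun hE φ
  simpa [h2 (Δ φ)] using this

include hΔ hε hprV1 hprV0 in
theorem FF_mul_gen (φ : SymmAlg R V) (v : V) :
    (TensorProduct.map LinearMap.id prV) (Δ (φ * ιS R V v))
      = (TensorProduct.map (LinearMap.mulRight R (ιS R V v)) LinearMap.id)
          ((TensorProduct.map LinearMap.id prV) (Δ φ)) + φ ⊗ₜ[R] v := by
  have h1 : ∀ z : SymmAlg R V ⊗[R] SymmAlg R V,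
      (TensorProduct.map LinearMap.id prV) (z * (1 ⊗ₜ[R] ιS R V v))
        = ((TensorProduct.rid R _) ((TensorProduct.map LinearMap.id ε.toLinearMap) z)) ⊗ₜ[R] v := by
    intro z
    induction z using TensorProduct.induction_on with
    | zero => simp
    | tmul a b =>
      simp only [Algebra.TensorProduct.tmul_mul_tmul, TensorProduct.map_tmul, one_mul,
        LinearMap.id_coe, id_eq, TensorProduct.rid_tmul, AlgHom.toLinearMap_apply]
      rw [prV_mul_gen ε hε prV hprV1 hprV0]
      rw [TensorProduct.tmul_smul, TensorProduct.smul_tmul']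
      rw [mul_one]
    | add a b ha hb => simp only [add_mul, map_add, ha, hb, TensorProduct.add_tmul]
  have h2 : ∀ z : SymmAlg R V ⊗[R] SymmAlg R V,
      (TensorProduct.map LinearMap.id prV) (z * (ιS R V v ⊗ₜ[R] 1))
        = (TensorProduct.map (LinearMap.mulRight R (ιS R V v)) LinearMap.id)
            ((TensorProduct.map LinearMap.id prV) z) := by
    intro z
    induction z using TensorProduct.induction_on with
    | zero => simp
    | tmul a b =>
      simp [Algebra.TensorProduct.tmul_mul_tmul, LinearMap.mulRight_apply]
    | add a b ha hb => simp only [add_mul, map_add, ha, hb]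
  rw [map_mul, hΔ v, mul_add, map_add, h1, h2, counit_right Δ ε hΔ hε φ, add_comm]

include hΔ hε hprV1 hprV0 in
theorem D_Mv (v : V) (z : SymmAlg R V ⊗[R] ExteriorAlgebra R V) :
    ceD Δ.toLinearMap prV (Mv v z) = Mv v (ceD Δ.toLinearMap prV z) + Lv v z := by
  induction z using TensorProduct.induction_on with
  | zero => simp
  | add a b ha hb => simp only [map_add, ha, hb]; abel
  | tmul φ ξ =>
    rw [Mv_tmul, ceD_tmul, ceD_tmul, FF_mul_gen Δ ε prV hΔ hε hprV1 hprV0]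
    rw [TensorProduct.add_tmul, map_add, map_add]
    have h2 : (TensorProduct.map LinearMap.id
          (LinearMap.mul' R (ExteriorAlgebra R V)
            ∘ₗ TensorProduct.map (ExteriorAlgebra.ι R) LinearMap.id))
        ((TensorProduct.assoc R _ _ _) ((φ ⊗ₜ[R] v) ⊗ₜ[R] ξ)) = Lv v (φ ⊗ₜ[R] ξ) := by
      simp [LinearMap.mul'_apply]
    rw [h2]
    congr 1
    generalize (TensorProduct.map LinearMap.id prV) (Δ φ) = w
    induction w using TensorProduct.induction_on with
    | zero => simp only [map_zero, TensorProduct.zero_tmul]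
    | tmul a u =>
      simp [LinearMap.mulRight_apply, LinearMap.mul'_apply]
    | add a b ha hb => simp only [map_add, TensorProduct.add_tmul, ha, hb]

include hρΛ in
theorem K_Lv (v : V) (z : SymmAlg R V ⊗[R] ExteriorAlgebra R V) :
    kInner ρΛ (Lv v z) = Mv v z - Lv v (kInner ρΛ z) := by
  induction z using TensorProduct.induction_on with
  | zero => simp only [map_zero, sub_zero]
  | add a b ha hb => simp only [map_add, ha, hb]; abel
  | tmul φ ξ =>
    rw [Lv_tmul, kInner_tmul, kInner_tmul, hρΛ v ξ]
    rw [TensorProduct.tmul_sub, map_sub, map_sub]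
    have e2 : ∀ w : V ⊗[R] ExteriorAlgebra R V,
        (TensorProduct.map
            (LinearMap.mul' R (SymmAlg R V) ∘ₗ TensorProduct.map LinearMap.id (ιS R V))
            LinearMap.id)
          ((TensorProduct.assoc R _ _ _).symm (φ ⊗ₜ[R]
            (TensorProduct.map LinearMap.id
              (LinearMap.mulLeft R (ExteriorAlgebra.ι R v)) w)))
        = Lv v ((TensorProduct.map
            (LinearMap.mul' R (SymmAlg R V) ∘ₗ TensorProduct.map LinearMap.id (ιS R V))
            LinearMap.id)
          ((TensorProduct.assoc R _ _ _).symm (φ ⊗ₜ[R] w))) := by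
      intro w
      induction w using TensorProduct.induction_on with
      | zero => simp only [map_zero, TensorProduct.tmul_zero]
      | tmul u η =>
        simp [LinearMap.mul'_apply, LinearMap.mulLeft_apply]
      | add a b ha hb =>
        simp only [map_add, TensorProduct.tmul_add, ha, hb]
    rw [e2, sub_left_inj]
    simp [LinearMap.mul'_apply]

theorem K_Mv (v : V) (z : SymmAlg R V ⊗[R] ExteriorAlgebra R V) :
    kInner ρΛ (Mv v z) = Mv v (kInner ρΛ z) := by
  induction z using TensorProduct.induction_on with
  | zero => simp only [map_zero]
  | add a b ha hb => simp only [map_add, ha, hb]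
  | tmul φ ξ =>
    rw [Mv_tmul, kInner_tmul, kInner_tmul]
    generalize ρΛ ξ = w
    induction w using TensorProduct.induction_on with
    | zero => simp only [map_zero, TensorProduct.tmul_zero]
    | tmul u η =>
      simp only [TensorProduct.assoc_symm_tmul, TensorProduct.map_tmul, LinearMap.coe_comp,
        Function.comp_apply, LinearMap.mul'_apply, LinearMap.id_coe, id_eq, Mv_tmul,
        LinearMap.mulRight_apply]
      rw [mul_right_comm]
    | add a b ha hb => simp only [map_add, TensorProduct.tmul_add, ha, hb]

theorem D_Lv (v : V) (z : SymmAlg R V ⊗[R] ExteriorAlgebra R V) :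
    ceD Δ.toLinearMap prV (Lv v z) = - Lv v (ceD Δ.toLinearMap prV z) := by
  induction z using TensorProduct.induction_on with
  | zero => simp only [map_zero, neg_zero]
  | add a b ha hb => simp only [map_add, ha, hb]; abel
  | tmul φ ξ =>
    rw [Lv_tmul, ceD_tmul, ceD_tmul]
    generalize (TensorProduct.map LinearMap.id prV) (Δ φ) = w
    induction w using TensorProduct.induction_on with
    | zero => simp only [map_zero, TensorProduct.zero_tmul, neg_zero]
    | tmul a u =>
      simp only [TensorProduct.assoc_tmul, TensorProduct.map_tmul, LinearMap.coe_comp,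
        Function.comp_apply, LinearMap.mul'_apply, LinearMap.id_coe, id_eq, Lv_tmul,
        LinearMap.mulLeft_apply, ← TensorProduct.tmul_neg, ← mul_assoc, ← neg_mul]
      congr 2
      rw [neg_mul]
      exact eq_neg_of_add_eq_zero_left (ExteriorAlgebra.ι_add_mul_swap (R := R) u v)
    | add a b ha hb =>
      simp only [map_add, TensorProduct.add_tmul, ha, hb, neg_add]

omit hΔ in
include hprV0 in
theorem D_algebraMap (r : R) (ξ : ExteriorAlgebra R V) :
    ceD Δ.toLinearMap prV ((algebraMap R (SymmAlg R V) r) ⊗ₜ[R] ξ) = 0 := by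
  rw [ceD_tmul]
  have : (TensorProduct.map LinearMap.id prV) (Δ (algebraMap R (SymmAlg R V) r)) = 0 := by
    rw [AlgHom.commutes, Algebra.TensorProduct.algebraMap_apply]
    simp [prV_one prV hprV0]
  rw [this, TensorProduct.zero_tmul, map_zero, map_zero]

include hρΛ1 in
theorem K_algebraMap (φ : SymmAlg R V) (r : R) :
    kInner ρΛ (φ ⊗ₜ[R] (algebraMap R (ExteriorAlgebra R V) r)) = 0 := by
  rw [kInner_tmul]
  rw [Algebra.algebraMap_eq_smul_one, map_smul, hρΛ1, smul_zero, TensorProduct.tmul_zero,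
    map_zero, map_zero]

end Aux3


section Aux4
variable {R : Type*} [CommRing R] {V : Type*} [AddCommGroup V] [Module R V]

/-- the bihomogeneous piece `Sym^r V ⊗ Λ^ℓ V` (as a span). -/
noncomputable def Wrl (r ℓ : ℕ) : Submodule R (SymmAlg R V ⊗[R] ExteriorAlgebra R V) :=
  Submodule.span R {z | ∃ φ ∈ (LinearMap.range (ιS R V) ^ r : Submodule R (SymmAlg R V)),
    ∃ ξ ∈ (LinearMap.range (ExteriorAlgebra.ι R (M := V)) ^ ℓ :
        Submodule R (ExteriorAlgebra R V)), z = φ ⊗ₜ[R] ξ}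

theorem tmul_mem_Wrl {r ℓ : ℕ} {φ : SymmAlg R V} {ξ : ExteriorAlgebra R V}
    (hφ : φ ∈ (LinearMap.range (ιS R V) ^ r : Submodule R (SymmAlg R V)))
    (hξ : ξ ∈ (LinearMap.range (ExteriorAlgebra.ι R (M := V)) ^ ℓ :
        Submodule R (ExteriorAlgebra R V))) :
    φ ⊗ₜ[R] ξ ∈ (Wrl r ℓ : Submodule R _) :=
  Submodule.subset_span ⟨φ, hφ, ξ, hξ, rfl⟩

theorem Mv_mem {r ℓ : ℕ} (v : V) {z : SymmAlg R V ⊗[R] ExteriorAlgebra R V}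
    (hz : z ∈ (Wrl r ℓ : Submodule R _)) : Mv v z ∈ (Wrl (r + 1) ℓ : Submodule R _) := by
  induction hz using Submodule.span_induction with
  | mem w hw =>
    obtain ⟨φ, hφ, ξ, hξ, rfl⟩ := hw
    rw [Mv_tmul]
    exact tmul_mem_Wrl (by rw [pow_succ]; exact Submodule.mul_mem_mul hφ ⟨v, rfl⟩) hξ
  | zero => rw [map_zero]; exact zero_mem _
  | add a b _ _ ha hb => rw [map_add]; exact add_mem ha hb
  | smul c a _ ha => rw [map_smul]; exact Submodule.smul_mem _ _ ha

theorem Lv_mem {r ℓ : ℕ} (v : V) {z : SymmAlg R V ⊗[R] ExteriorAlgebra R V}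
    (hz : z ∈ (Wrl r ℓ : Submodule R _)) : Lv v z ∈ (Wrl r (ℓ + 1) : Submodule R _) := by
  induction hz using Submodule.span_induction with
  | mem w hw =>
    obtain ⟨φ, hφ, ξ, hξ, rfl⟩ := hw
    rw [Lv_tmul]
    exact tmul_mem_Wrl hφ (by rw [pow_succ']; exact Submodule.mul_mem_mul ⟨v, rfl⟩ hξ)
  | zero => rw [map_zero]; exact zero_mem _
  | add a b _ _ ha hb => rw [map_add]; exact add_mem ha hb
  | smul c a _ ha => rw [map_smul]; exact Submodule.smul_mem _ _ ha

variable (Δ : SymmAlg R V →ₐ[R] SymmAlg R V ⊗[R] SymmAlg R V)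
variable (ε : SymmAlg R V →ₐ[R] R)
variable (prV : SymmAlg R V →ₗ[R] V)
variable (ρΛ : ExteriorAlgebra R V →ₗ[R] V ⊗[R] ExteriorAlgebra R V)
variable (hΔ : ∀ v : V, Δ (ιS R V v) = 1 ⊗ₜ[R] ιS R V v + ιS R V v ⊗ₜ[R] 1)
variable (hε : ∀ v : V, ε (ιS R V v) = 0)
variable (hprV1 : ∀ v : V, prV (ιS R V v) = v)
variable (hprV0 : ∀ (s : ℕ) (x : Fin s → V), s ≠ 1 → prV (∏ j, ιS R V (x j)) = 0)
variable (hρΛ1 : ρΛ 1 = 0)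
variable (hρΛ : ∀ (v : V) (ξ : ExteriorAlgebra R V),
      ρΛ (ExteriorAlgebra.ι R v * ξ)
        = v ⊗ₜ[R] ξ
          - TensorProduct.map LinearMap.id (LinearMap.mulLeft R (ExteriorAlgebra.ι R v)) (ρΛ ξ))

include hΔ hprV0 in
theorem D_zero_of_Wrl0 {ℓ : ℕ} {z : SymmAlg R V ⊗[R] ExteriorAlgebra R V}
    (hz : z ∈ (Wrl 0 ℓ : Submodule R _)) : ceD Δ.toLinearMap prV z = 0 := by
  induction hz using Submodule.span_induction with
  | mem w hw =>
    obtain ⟨φ, hφ, ξ, hξ, rfl⟩ := hw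
    rw [pow_zero] at hφ
    obtain ⟨c, rfl⟩ := Submodule.mem_one.mp hφ
    exact D_algebraMap Δ prV hprV0 c ξ
  | zero => exact map_zero _
  | add a b _ _ ha hb => rw [map_add, ha, hb, add_zero]
  | smul c a _ ha => rw [map_smul, ha, smul_zero]

include hρΛ1 in
theorem K_zero_of_Wrl0 {r : ℕ} {z : SymmAlg R V ⊗[R] ExteriorAlgebra R V}
    (hz : z ∈ (Wrl r 0 : Submodule R _)) : kInner ρΛ z = 0 := by
  induction hz using Submodule.span_induction with
  | mem w hw =>
    obtain ⟨φ, hφ, ξ, hξ, rfl⟩ := hw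
    rw [pow_zero] at hξ
    obtain ⟨c, rfl⟩ := Submodule.mem_one.mp hξ
    exact K_algebraMap ρΛ hρΛ1 φ c
  | zero => exact map_zero _
  | add a b _ _ ha hb => rw [map_add, ha, hb, add_zero]
  | smul c a _ ha => rw [map_smul, ha, smul_zero]

include hΔ hε hprV1 hprV0 in
theorem D_mem : ∀ (r : ℕ) {ℓ : ℕ} {z : SymmAlg R V ⊗[R] ExteriorAlgebra R V},
    z ∈ (Wrl (r + 1) ℓ : Submodule R _) →
    ceD Δ.toLinearMap prV z ∈ (Wrl r (ℓ + 1) : Submodule R _) := by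
  intro r
  induction r with
  | zero =>
    intro ℓ z hz
    induction hz using Submodule.span_induction with
    | mem w hw =>
      obtain ⟨φ, hφ, ξ, hξ, rfl⟩ := hw
      rw [pow_succ] at hφ
      refine Submodule.mul_induction_on hφ (fun m hm u hu => ?_) (fun a b ha hb => ?_)
      · obtain ⟨v, rfl⟩ := hu
        have : (m * ιS R V v) ⊗ₜ[R] ξ = Mv v (m ⊗ₜ[R] ξ) := rfl
        rw [this, D_Mv Δ ε prV hΔ hε hprV1 hprV0]
        have hm0 : ceD Δ.toLinearMap prV (m ⊗ₜ[R] ξ) = 0 :=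
          D_zero_of_Wrl0 Δ prV hΔ hprV0 (tmul_mem_Wrl hm hξ)
        rw [hm0, map_zero, zero_add]
        exact Lv_mem v (tmul_mem_Wrl hm hξ)
      · rw [TensorProduct.add_tmul, map_add]; exact add_mem ha hb
    | zero => rw [map_zero]; exact zero_mem _
    | add a b _ _ ha hb => rw [map_add]; exact add_mem ha hb
    | smul c a _ ha => rw [map_smul]; exact Submodule.smul_mem _ _ ha
  | succ r ih =>
    intro ℓ z hz
    induction hz using Submodule.span_induction with
    | mem w hw =>
      obtain ⟨φ, hφ, ξ, hξ, rfl⟩ := hw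
      rw [pow_succ] at hφ
      refine Submodule.mul_induction_on hφ (fun m hm u hu => ?_) (fun a b ha hb => ?_)
      · obtain ⟨v, rfl⟩ := hu
        have : (m * ιS R V v) ⊗ₜ[R] ξ = Mv v (m ⊗ₜ[R] ξ) := rfl
        rw [this, D_Mv Δ ε prV hΔ hε hprV1 hprV0]
        exact add_mem (Mv_mem v (ih (tmul_mem_Wrl hm hξ))) (Lv_mem v (tmul_mem_Wrl hm hξ))
      · rw [TensorProduct.add_tmul, map_add]; exact add_mem ha hb
    | zero => rw [map_zero]; exact zero_mem _
    | add a b _ _ ha hb => rw [map_add]; exact add_mem ha hb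
    | smul c a _ ha => rw [map_smul]; exact Submodule.smul_mem _ _ ha

include hρΛ1 hρΛ in
theorem K_mem : ∀ (ℓ : ℕ) {r : ℕ} {z : SymmAlg R V ⊗[R] ExteriorAlgebra R V},
    z ∈ (Wrl r (ℓ + 1) : Submodule R _) →
    kInner ρΛ z ∈ (Wrl (r + 1) ℓ : Submodule R _) := by
  intro ℓ
  induction ℓ with
  | zero =>
    intro r z hz
    induction hz using Submodule.span_induction with
    | mem w hw =>
      obtain ⟨φ, hφ, ξ, hξ, rfl⟩ := hw
      rw [pow_succ'] at hξ
      refine Submodule.mul_induction_on hξ (fun u hu η hη => ?_) (fun a b ha hb => ?_)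
      · obtain ⟨v, rfl⟩ := hu
        have : φ ⊗ₜ[R] (ExteriorAlgebra.ι R v * η) = Lv v (φ ⊗ₜ[R] η) := rfl
        rw [this, K_Lv ρΛ hρΛ]
        have h0 : kInner ρΛ (φ ⊗ₜ[R] η) = 0 :=
          K_zero_of_Wrl0 ρΛ hρΛ1 (tmul_mem_Wrl hφ hη)
        rw [h0, map_zero, sub_zero]
        exact Mv_mem v (tmul_mem_Wrl hφ hη)
      · rw [TensorProduct.tmul_add, map_add]; exact add_mem ha hb
    | zero => rw [map_zero]; exact zero_mem _
    | add a b _ _ ha hb => rw [map_add]; exact add_mem ha hb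
    | smul c a _ ha => rw [map_smul]; exact Submodule.smul_mem _ _ ha
  | succ ℓ ih =>
    intro r z hz
    induction hz using Submodule.span_induction with
    | mem w hw =>
      obtain ⟨φ, hφ, ξ, hξ, rfl⟩ := hw
      rw [pow_succ'] at hξ
      refine Submodule.mul_induction_on hξ (fun u hu η hη => ?_) (fun a b ha hb => ?_)
      · obtain ⟨v, rfl⟩ := hu
        have : φ ⊗ₜ[R] (ExteriorAlgebra.ι R v * η) = Lv v (φ ⊗ₜ[R] η) := rfl
        rw [this, K_Lv ρΛ hρΛ]
        exact sub_mem (Mv_mem v (tmul_mem_Wrl hφ hη)) (Lv_mem v (ih (tmul_mem_Wrl hφ hη)))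
      · rw [TensorProduct.tmul_add, map_add]; exact add_mem ha hb
    | zero => rw [map_zero]; exact zero_mem _
    | add a b _ _ ha hb => rw [map_add]; exact add_mem ha hb
    | smul c a _ ha => rw [map_smul]; exact Submodule.smul_mem _ _ ha

include hρΛ1 hρΛ in
theorem KK_zero : ∀ (ℓ : ℕ) {r : ℕ} {z : SymmAlg R V ⊗[R] ExteriorAlgebra R V},
    z ∈ (Wrl r ℓ : Submodule R _) → kInner ρΛ (kInner ρΛ z) = 0 := by
  intro ℓ
  induction ℓ with
  | zero =>
    intro r z hz
    rw [K_zero_of_Wrl0 ρΛ hρΛ1 hz, map_zero]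
  | succ ℓ ih =>
    intro r z hz
    induction hz using Submodule.span_induction with
    | mem w hw =>
      obtain ⟨φ, hφ, ξ, hξ, rfl⟩ := hw
      rw [pow_succ'] at hξ
      refine Submodule.mul_induction_on hξ (fun u hu η hη => ?_) (fun a b ha hb => ?_)
      · obtain ⟨v, rfl⟩ := hu
        have h1 : φ ⊗ₜ[R] (ExteriorAlgebra.ι R v * η) = Lv v (φ ⊗ₜ[R] η) := rfl
        rw [h1, K_Lv ρΛ hρΛ, map_sub, K_Mv ρΛ, K_Lv ρΛ hρΛ,
          ih (tmul_mem_Wrl hφ hη), map_zero, sub_zero, sub_self]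
      · rw [TensorProduct.tmul_add, map_add, map_add, ha, hb, add_zero]
    | zero => simp
    | add a b _ _ ha hb => rw [map_add, map_add, ha, hb, add_zero]
    | smul c a _ ha => rw [map_smul, map_smul, ha, smul_zero]

include hΔ hε hprV1 hprV0 hρΛ1 hρΛ in
theorem core_homotopy : ∀ (n r ℓ : ℕ), r + ℓ = n →
    ∀ {z : SymmAlg R V ⊗[R] ExteriorAlgebra R V}, z ∈ (Wrl r ℓ : Submodule R _) →
    ceD Δ.toLinearMap prV (kInner ρΛ z) + kInner ρΛ (ceD Δ.toLinearMap prV z) = n • z := by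
  intro n
  induction n with
  | zero =>
    intro r ℓ hn z hz
    obtain ⟨rfl, rfl⟩ : r = 0 ∧ ℓ = 0 := by omega
    rw [K_zero_of_Wrl0 ρΛ hρΛ1 hz, D_zero_of_Wrl0 Δ prV hΔ hprV0 hz, map_zero, map_zero,
      add_zero, zero_smul]
  | succ n ihn =>
    intro r ℓ hn z hz
    cases ℓ with
    | zero =>
      have hr : r = n + 1 := by omega
      subst hr
      induction hz using Submodule.span_induction with
      | mem w hw =>
        obtain ⟨φ, hφ, ξ, hξ, rfl⟩ := hw
        rw [pow_succ] at hφ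
        refine Submodule.mul_induction_on hφ (fun m hm u hu => ?_) (fun a b ha hb => ?_)
        case refine_2 =>
          rw [TensorProduct.add_tmul, map_add, map_add, map_add, map_add, smul_add, ← ha, ← hb]
          abel
        · obtain ⟨v, rfl⟩ := hu
          have hmem : m ⊗ₜ[R] ξ ∈ (Wrl n 0 : Submodule R _) := tmul_mem_Wrl hm hξ
          have hZ : (m * ιS R V v) ⊗ₜ[R] ξ = Mv v (m ⊗ₜ[R] ξ) := rfl
          rw [hZ, K_Mv ρΛ, D_Mv Δ ε prV hΔ hε hprV1 hprV0,
            D_Mv Δ ε prV hΔ hε hprV1 hprV0, map_add, K_Mv ρΛ, K_Lv ρΛ hρΛ]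
          have hcore := ihn n 0 rfl hmem
          calc Mv v (ceD Δ.toLinearMap prV (kInner ρΛ (m ⊗ₜ[R] ξ)))
                + Lv v (kInner ρΛ (m ⊗ₜ[R] ξ))
                + (Mv v (kInner ρΛ (ceD Δ.toLinearMap prV (m ⊗ₜ[R] ξ)))
                  + (Mv v (m ⊗ₜ[R] ξ) - Lv v (kInner ρΛ (m ⊗ₜ[R] ξ))))
              = Mv v (ceD Δ.toLinearMap prV (kInner ρΛ (m ⊗ₜ[R] ξ))
                  + kInner ρΛ (ceD Δ.toLinearMap prV (m ⊗ₜ[R] ξ))) + Mv v (m ⊗ₜ[R] ξ) := by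
                rw [map_add]; abel
            _ = (n + 1) • Mv v (m ⊗ₜ[R] ξ) := by
                rw [hcore, map_nsmul, succ_nsmul]
      | zero => simp
      | add a b _ _ ha hb =>
          rw [map_add, map_add, map_add, map_add, smul_add, ← ha, ← hb]; abel
      | smul c a _ ha =>
          rw [map_smul, map_smul, map_smul, map_smul, ← smul_add, ha, smul_comm]
    | succ ℓ =>
      have hr : r + ℓ = n := by omega
      induction hz using Submodule.span_induction with
      | mem w hw =>
        obtain ⟨φ, hφ, ξ, hξ, rfl⟩ := hw
        rw [pow_succ'] at hξ
        refine Submodule.mul_induction_on hξ (fun u hu η hη => ?_) (fun a b ha hb => ?_)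
        case refine_2 =>
          rw [TensorProduct.tmul_add, map_add, map_add, map_add, map_add, smul_add, ← ha, ← hb]
          abel
        · obtain ⟨v, rfl⟩ := hu
          have hmem : φ ⊗ₜ[R] η ∈ (Wrl r ℓ : Submodule R _) := tmul_mem_Wrl hφ hη
          have hZ : φ ⊗ₜ[R] (ExteriorAlgebra.ι R v * η) = Lv v (φ ⊗ₜ[R] η) := rfl
          rw [hZ, K_Lv ρΛ hρΛ, D_Lv Δ prV, map_sub, map_neg,
            D_Mv Δ ε prV hΔ hε hprV1 hprV0, D_Lv Δ prV, K_Lv ρΛ hρΛ]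
          have hcore := ihn r ℓ hr hmem
          calc Mv v (ceD Δ.toLinearMap prV (φ ⊗ₜ[R] η)) + Lv v (φ ⊗ₜ[R] η)
                - - Lv v (ceD Δ.toLinearMap prV (kInner ρΛ (φ ⊗ₜ[R] η)))
                + - (Mv v (ceD Δ.toLinearMap prV (φ ⊗ₜ[R] η))
                  - Lv v (kInner ρΛ (ceD Δ.toLinearMap prV (φ ⊗ₜ[R] η))))
              = Lv v (ceD Δ.toLinearMap prV (kInner ρΛ (φ ⊗ₜ[R] η))
                  + kInner ρΛ (ceD Δ.toLinearMap prV (φ ⊗ₜ[R] η))) + Lv v (φ ⊗ₜ[R] η) := by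
                rw [map_add]; abel
            _ = (n + 1) • Lv v (φ ⊗ₜ[R] η) := by
                rw [hcore, map_nsmul, succ_nsmul]
      | zero => simp
      | add a b _ _ ha hb =>
          rw [map_add, map_add, map_add, map_add, smul_add, ← ha, ← hb]; abel
      | smul c a _ ha =>
          rw [map_smul, map_smul, map_smul, map_smul, ← smul_add, ha, smul_comm]

end Aux4


section Plumb
variable {R : Type*} [CommRing R] {V : Type*} [AddCommGroup V] [Module R V]

theorem one_mem_P0 :
    (1 : SymmAlg R V) ∈ (LinearMap.range (ιS R V) ^ 0 : Submodule R (SymmAlg R V)) := by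
  rw [pow_zero]
  simpa using Submodule.algebraMap_mem (A := SymmAlg R V) (1 : R)

theorem one_mem_Q0 :
    (1 : ExteriorAlgebra R V) ∈ (LinearMap.range (ExteriorAlgebra.ι R (M := V)) ^ 0 :
      Submodule R (ExteriorAlgebra R V)) := by
  rw [pow_zero]
  simpa using Submodule.algebraMap_mem (A := ExteriorAlgebra R V) (1 : R)

theorem horizTot_lof (Δl : SymmAlg R V →ₗ[R] SymmAlg R V ⊗[R] SymmAlg R V)
    (prV : SymmAlg R V →ₗ[R] V) (k : ℕ) (z : DvE R V k) :
    horizTot Δl prV (DirectSum.lof R ℕ (fun k => DvE R V k) k z)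
      = DirectSum.lof R ℕ (fun k => DvE R V k) k
          (((-1 : ℤ) ^ k) • (TensorProduct.map LinearMap.id (ceD Δl prV)) z) := by
  unfold horizTot
  rw [DirectSum.toModule_lof]
  rw [LinearMap.comp_apply, LinearMap.smul_apply]
  congr 1
  letI : Module ℤ (Tpow R (SymmAlg R V) k) := PiTensorProduct.module'
  exact int_smul_eq_zsmul (M := DvE R V k) TensorProduct.leftModule _ _

theorem jAug_lof (k : ℕ) (X : Tpow R (SymmAlg R V) k) :
    jAug (DirectSum.lof R ℕ (fun k => Tpow R (SymmAlg R V) k) k X)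
      = DirectSum.lof R ℕ (fun k => DvE R V k) k
          (X ⊗ₜ[R] ((1 : SymmAlg R V) ⊗ₜ[R] (1 : ExteriorAlgebra R V))) := by
  simp [jAug, DirectSum.toModule_lof]

theorem qAug_lof (εl : SymmAlg R V →ₗ[R] R) (εΛl : ExteriorAlgebra R V →ₗ[R] R) (k : ℕ)
    (x : Tpow R (SymmAlg R V) k) (φ : SymmAlg R V) (ξ : ExteriorAlgebra R V) :
    qAug εl εΛl (DirectSum.lof R ℕ (fun k => DvE R V k) k (x ⊗ₜ[R] (φ ⊗ₜ[R] ξ)))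
      = DirectSum.lof R ℕ (fun k => Tpow R (SymmAlg R V) k) k ((εl φ * εΛl ξ) • x) := by
  simp [qAug, DirectSum.toModule_lof, LinearMap.mul'_apply]

theorem DvE_induction {C : DvETot R V → Prop} (h0 : C 0)
    (hadd : ∀ a b, C a → C b → C (a + b))
    (hp : ∀ (k r ℓ : ℕ) (x : Tpow R (SymmAlg R V) k) (φ : SymmAlg R V)
        (ξ : ExteriorAlgebra R V),
      φ ∈ (LinearMap.range (ιS R V) ^ r : Submodule R (SymmAlg R V)) →
      ξ ∈ (LinearMap.range (ExteriorAlgebra.ι R (M := V)) ^ ℓ :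
        Submodule R (ExteriorAlgebra R V)) →
      C (DirectSum.lof R ℕ (fun k => DvE R V k) k (x ⊗ₜ[R] (φ ⊗ₜ[R] ξ)))) :
    ∀ z : DvETot R V, C z := by
  intro z
  induction z using DirectSum.induction_on with
  | zero => exact h0
  | add a b ha hb => exact hadd a b ha hb
  | of k y =>
    rw [← DirectSum.lof_eq_of R]
    induction y using TensorProduct.induction_on with
    | zero => rw [map_zero]; exact h0
    | add a b ha hb => rw [map_add]; exact hadd _ _ ha hb
    | tmul x w =>
      induction w using TensorProduct.induction_on with
      | zero => rw [TensorProduct.tmul_zero, map_zero]; exact h0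
      | add a b ha hb => rw [TensorProduct.tmul_add, map_add]; exact hadd _ _ ha hb
      | tmul φ ξ =>
        refine Submodule.iSup_induction' _
          (motive := fun φ' _ => C (DirectSum.lof R ℕ (fun k => DvE R V k) k
            (x ⊗ₜ[R] (φ' ⊗ₜ[R] ξ))))
          (fun r φ' hφ' => ?_) ?_ (fun a b _ _ ha hb => ?_) (gen_sym φ)
        · refine Submodule.iSup_induction' _
            (motive := fun ξ' _ => C (DirectSum.lof R ℕ (fun k => DvE R V k) k
              (x ⊗ₜ[R] (φ' ⊗ₜ[R] ξ'))))
            (fun ℓ ξ' hξ' => ?_) ?_ (fun a b _ _ ha hb => ?_) (gen_ext ξ)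
          · exact hp k r ℓ x φ' ξ' hφ' hξ'
          · beta_reduce
            rw [TensorProduct.tmul_zero, TensorProduct.tmul_zero, map_zero]; exact h0
          · beta_reduce
            rw [TensorProduct.tmul_add, TensorProduct.tmul_add, map_add]
            exact hadd _ _ ha hb
        · beta_reduce
          rw [TensorProduct.zero_tmul, TensorProduct.tmul_zero, map_zero]; exact h0
        · beta_reduce
          rw [TensorProduct.add_tmul, TensorProduct.tmul_add, map_add]
          exact hadd _ _ ha hb

variable [Algebra ℚ R]

theorem kappa_W (ρΛ : ExteriorAlgebra R V →ₗ[R] V ⊗[R] ExteriorAlgebra R V)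
    (κ : DvETot R V →ₗ[R] DvETot R V)
    (hκ : ∀ (k r ℓ : ℕ) (x : Tpow R (SymmAlg R V) k)
      (φ : SymmAlg R V) (ξ : ExteriorAlgebra R V),
      φ ∈ (LinearMap.range (ιS R V) : Submodule R (SymmAlg R V)) ^ r →
      ξ ∈ (LinearMap.range (ExteriorAlgebra.ι R (M := V)) :
            Submodule R (ExteriorAlgebra R V)) ^ ℓ →
      κ (DirectSum.lof R ℕ (fun k => DvE R V k) k (x ⊗ₜ[R] (φ ⊗ₜ[R] ξ)))
        = if r + ℓ = 0 then 0
          else DirectSum.lof R ℕ (fun k => DvE R V k) k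
            (algebraMap ℚ R ((-1 : ℚ) ^ k / ((r + ℓ : ℕ) : ℚ)) •
              TensorProduct.map LinearMap.id (kInner ρΛ) (x ⊗ₜ[R] (φ ⊗ₜ[R] ξ))))
    (k r ℓ : ℕ) (x : Tpow R (SymmAlg R V) k) {w : SymmAlg R V ⊗[R] ExteriorAlgebra R V}
    (hw : w ∈ (Wrl r ℓ : Submodule R _)) :
    κ (DirectSum.lof R ℕ (fun k => DvE R V k) k (x ⊗ₜ[R] w))
      = if r + ℓ = 0 then 0
        else DirectSum.lof R ℕ (fun k => DvE R V k) k
          (algebraMap ℚ R ((-1 : ℚ) ^ k / ((r + ℓ : ℕ) : ℚ)) •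
            TensorProduct.map LinearMap.id (kInner ρΛ) (x ⊗ₜ[R] w)) := by
  induction hw using Submodule.span_induction with
  | mem w hw =>
    obtain ⟨φ, hφ, ξ, hξ, rfl⟩ := hw
    exact hκ k r ℓ x φ ξ hφ hξ
  | zero =>
    rw [TensorProduct.tmul_zero, map_zero, map_zero]
    split_ifs <;> simp
  | add a b _ _ hfa hfb =>
    by_cases h : r + ℓ = 0
    · rw [if_pos h] at hfa hfb ⊢
      simp only [TensorProduct.tmul_add, map_add, hfa, hfb, add_zero]
    · rw [if_neg h] at hfa hfb ⊢
      simp only [TensorProduct.tmul_add, map_add, smul_add, hfa, hfb]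
  | smul c a _ hfa =>
    by_cases h : r + ℓ = 0
    · rw [if_pos h] at hfa ⊢
      simp only [TensorProduct.tmul_smul, map_smul, hfa, smul_zero]
    · rw [if_neg h] at hfa ⊢
      simp only [TensorProduct.tmul_smul, map_smul, hfa]
      rw [smul_comm]

theorem q_lof_W (ε : SymmAlg R V →ₐ[R] R) (hε : ∀ v, ε (ιS R V v) = 0)
    (k r ℓ : ℕ) (x : Tpow R (SymmAlg R V) k)
    {w : SymmAlg R V ⊗[R] ExteriorAlgebra R V}
    (hw : w ∈ (Wrl (r + 1) ℓ : Submodule R _)) :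
    qAug ε.toLinearMap (ExteriorAlgebra.algebraMapInv (R := R) (M := V)).toLinearMap
      (DirectSum.lof R ℕ (fun k => DvE R V k) k (x ⊗ₜ[R] w)) = 0 := by
  induction hw using Submodule.span_induction with
  | mem w hw =>
    obtain ⟨φ, hφ, ξ, hξ, rfl⟩ := hw
    rw [qAug_lof]
    rw [AlgHom.toLinearMap_apply, eps_pow ε hε r φ hφ, zero_mul, zero_smul, map_zero]
  | zero => rw [TensorProduct.tmul_zero, map_zero, map_zero]
  | add a b _ _ hfa hfb =>
    rw [TensorProduct.tmul_add, map_add, map_add, hfa, hfb, add_zero]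
  | smul c a _ hfa =>
    rw [TensorProduct.tmul_smul, map_smul, map_smul, hfa, smul_zero]

end Plumb


-- CHUNK6

/-- **The row special deformation retract of the van Est double complex.**
With `j(X) = X ⊗ 1 ⊗ 1`, `q(X ⊗ φ ⊗ ξ) = ε(φ)ε(ξ)·X`, and the homotopy
`k(X ⊗ φ ⊗ ξ) = ((−1)^k/(r+ℓ)) · X ⊗ (φ ∨ pr_V(ξ₍₋₁₎)) ⊗ ξ₍₀₎` on bidegree `(r, ℓ)`
(zero for `r = ℓ = 0`), one has `q ∘ j = id`, `∂ k + k ∂ = id − j q` (stated as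
`∂ k + k ∂ + j q = id`), and moreover `k² = 0`, `q k = 0`, `k j = 0`:
a special deformation retract for the horizontal differential `∂`. -/
theorem vanEst_row_special_retract
    {R : Type*} [CommRing R] [Algebra ℚ R]
    {V : Type*} [AddCommGroup V] [Module R V]
    (Δ : SymmAlg R V →ₐ[R] SymmAlg R V ⊗[R] SymmAlg R V)
    (hΔ : ∀ v : V, Δ (ιS R V v) = 1 ⊗ₜ[R] ιS R V v + ιS R V v ⊗ₜ[R] 1)
    (ε : SymmAlg R V →ₐ[R] R) (hε : ∀ v : V, ε (ιS R V v) = 0)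
    (prV : SymmAlg R V →ₗ[R] V)
    (hprV1 : ∀ v : V, prV (ιS R V v) = v)
    (hprV0 : ∀ (s : ℕ) (x : Fin s → V), s ≠ 1 → prV (∏ j, ιS R V (x j)) = 0)
    (ρΛ : ExteriorAlgebra R V →ₗ[R] V ⊗[R] ExteriorAlgebra R V)
    (hρΛ1 : ρΛ 1 = 0)
    (hρΛ : ∀ (v : V) (ξ : ExteriorAlgebra R V),
      ρΛ (ExteriorAlgebra.ι R v * ξ)
        = v ⊗ₜ[R] ξ
          - TensorProduct.map LinearMap.id (LinearMap.mulLeft R (ExteriorAlgebra.ι R v)) (ρΛ ξ))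
    -- the homotopy `k`, characterized on bihomogeneous elements
    (κ : DvETot R V →ₗ[R] DvETot R V)
    (hκ : ∀ (k r ℓ : ℕ) (x : Tpow R (SymmAlg R V) k)
      (φ : SymmAlg R V) (ξ : ExteriorAlgebra R V),
      φ ∈ (LinearMap.range (ιS R V) : Submodule R (SymmAlg R V)) ^ r →
      ξ ∈ (LinearMap.range (ExteriorAlgebra.ι R (M := V)) :
            Submodule R (ExteriorAlgebra R V)) ^ ℓ →
      κ (DirectSum.lof R ℕ (fun k => DvE R V k) k (x ⊗ₜ[R] (φ ⊗ₜ[R] ξ)))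
        = if r + ℓ = 0 then 0
          else DirectSum.lof R ℕ (fun k => DvE R V k) k
            (algebraMap ℚ R ((-1 : ℚ) ^ k / ((r + ℓ : ℕ) : ℚ)) •
              TensorProduct.map LinearMap.id (kInner ρΛ) (x ⊗ₜ[R] (φ ⊗ₜ[R] ξ)))) :
    (∀ y : TcaTot R V,
      qAug ε.toLinearMap (ExteriorAlgebra.algebraMapInv (R := R) (M := V)).toLinearMap
        (jAug y) = y) ∧
    (∀ x : DvETot R V,
      horizTot Δ.toLinearMap prV (κ x) + κ (horizTot Δ.toLinearMap prV x)
        + jAug (qAug ε.toLinearMap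
            (ExteriorAlgebra.algebraMapInv (R := R) (M := V)).toLinearMap x)
      = x) ∧
    (∀ x : DvETot R V, κ (κ x) = 0) ∧
    (∀ x : DvETot R V,
      qAug ε.toLinearMap (ExteriorAlgebra.algebraMapInv (R := R) (M := V)).toLinearMap
        (κ x) = 0) ∧
    (∀ y : TcaTot R V, κ (jAug y) = 0) := by
  classical
  have hεL1 : (ExteriorAlgebra.algebraMapInv (R := R) (M := V)) (1 : ExteriorAlgebra R V) = 1 :=
    map_one _
  have hmapK : ∀ (k : ℕ) (x : Tpow R (SymmAlg R V) k) (w : SymmAlg R V ⊗[R] ExteriorAlgebra R V),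
      (TensorProduct.map LinearMap.id (kInner ρΛ)) (x ⊗ₜ[R] w) = x ⊗ₜ[R] kInner ρΛ w := by
    intro k x w; simp
  have hmapD : ∀ (k : ℕ) (x : Tpow R (SymmAlg R V) k) (w : SymmAlg R V ⊗[R] ExteriorAlgebra R V),
      (TensorProduct.map LinearMap.id (ceD Δ.toLinearMap prV)) (x ⊗ₜ[R] w)
        = x ⊗ₜ[R] ceD Δ.toLinearMap prV w := by
    intro k x w; simp
  refine ⟨?_, ?_, ?_, ?_, ?_⟩
  · -- q ∘ j = id
    intro y
    induction y using DirectSum.induction_on with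
    | zero => simp
    | add a b ha hb => simp only [map_add, ha, hb]
    | of k X =>
      rw [← DirectSum.lof_eq_of R, jAug_lof, qAug_lof]
      rw [AlgHom.toLinearMap_apply, AlgHom.toLinearMap_apply, map_one, hεL1, one_mul, one_smul]
  · -- homotopy identity
    refine DvE_induction ?_ ?_ ?_
    · simp
    · intro a b ha hb
      simp only [map_add]
      conv_rhs => rw [← ha, ← hb]
      abel
    · intro k r ℓ x φ ξ hφ hξ
      have hw : φ ⊗ₜ[R] ξ ∈ (Wrl r ℓ : Submodule R _) := tmul_mem_Wrl hφ hξ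
      by_cases h0 : r + ℓ = 0
      · obtain ⟨hr, hl⟩ := Nat.add_eq_zero.mp h0
        subst hr; subst hl
        rw [hκ k 0 0 x φ ξ hφ hξ, if_pos rfl, map_zero]
        have hz0 : ((-1 : ℤ) ^ k) • (x ⊗ₜ[R] (0 : SymmAlg R V ⊗[R] ExteriorAlgebra R V) :
            DvE R V k) = 0 := by
          have := Int.cast_smul_eq_zsmul R ((-1 : ℤ) ^ k)
            (x ⊗ₜ[R] (0 : SymmAlg R V ⊗[R] ExteriorAlgebra R V) : DvE R V k)
          push_cast at this
          exact this.symm.trans (by rw [TensorProduct.tmul_zero, smul_zero])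
        rw [horizTot_lof, hmapD, D_zero_of_Wrl0 Δ prV hΔ hprV0 hw, hz0, map_zero, map_zero, zero_add, zero_add]
        rw [pow_zero] at hφ hξ
        obtain ⟨c, rfl⟩ := Submodule.mem_one.mp hφ
        obtain ⟨d, rfl⟩ := Submodule.mem_one.mp hξ
        rw [qAug_lof, jAug_lof, AlgHom.toLinearMap_apply, AlgHom.toLinearMap_apply,
          AlgHom.commutes]
        have hd : (ExteriorAlgebra.algebraMapInv (R := R) (M := V))
            (algebraMap R (ExteriorAlgebra R V) d) = d :=
          ExteriorAlgebra.algebraMap_leftInverse V d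
        rw [hd]
        have hsc : algebraMap R R c = c := rfl
        rw [hsc]
        have hten : (algebraMap R (SymmAlg R V) c) ⊗ₜ[R] (algebraMap R (ExteriorAlgebra R V) d)
            = (c * d) • ((1 : SymmAlg R V) ⊗ₜ[R] (1 : ExteriorAlgebra R V)) := by
          rw [Algebra.algebraMap_eq_smul_one c, Algebra.algebraMap_eq_smul_one d,
            TensorProduct.tmul_smul, ← TensorProduct.smul_tmul', smul_smul, mul_comm d c]
        rw [hten, TensorProduct.smul_tmul]
      · -- positive total degree
        rw [hκ k r ℓ x φ ξ hφ hξ, if_neg h0]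
        have hq : qAug ε.toLinearMap
            (ExteriorAlgebra.algebraMapInv (R := R) (M := V)).toLinearMap
            (DirectSum.lof R ℕ (fun k => DvE R V k) k (x ⊗ₜ[R] (φ ⊗ₜ[R] ξ))) = 0 := by
          rcases r with _ | r'
          · rcases ℓ with _ | ℓ'
            · exact absurd rfl h0
            · rw [qAug_lof, AlgHom.toLinearMap_apply, AlgHom.toLinearMap_apply,
                epsL_pow ℓ' ξ hξ, mul_zero, zero_smul, map_zero]
          · rw [qAug_lof, AlgHom.toLinearMap_apply, eps_pow ε hε r' φ hφ, zero_mul,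
              zero_smul, map_zero]
        rw [hq, map_zero, add_zero]
        have hzsE : ∀ (u : DvE R V k), ((-1 : ℤ) ^ k) • u = ((-1 : R) ^ k) • u := by
          intro u
          have := Int.cast_smul_eq_zsmul R ((-1 : ℤ) ^ k) u
          push_cast at this
          exact this.symm
        have hDw : κ (DirectSum.lof R ℕ (fun k => DvE R V k) k
              (x ⊗ₜ[R] (ceD Δ.toLinearMap prV (φ ⊗ₜ[R] ξ))))
            = algebraMap ℚ R ((-1 : ℚ) ^ k / ((r + ℓ : ℕ) : ℚ)) •
              DirectSum.lof R ℕ (fun k => DvE R V k) k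
                (x ⊗ₜ[R] (kInner ρΛ (ceD Δ.toLinearMap prV (φ ⊗ₜ[R] ξ)))) := by
          rcases r with _ | r'
          · rw [D_zero_of_Wrl0 Δ prV hΔ hprV0 hw, TensorProduct.tmul_zero, map_zero, map_zero,
              map_zero, TensorProduct.tmul_zero, map_zero, smul_zero]
          · have hmem := D_mem Δ ε prV hΔ hε hprV1 hprV0 r' (ℓ := ℓ) hw
            have hval := kappa_W ρΛ κ hκ k r' (ℓ + 1) x hmem
            rw [if_neg (by omega)] at hval
            have hnat : r' + (ℓ + 1) = r' + 1 + ℓ := by omega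
            rw [hnat] at hval
            rw [hval, map_smul, hmapK]
        have hterm1 : horizTot Δ.toLinearMap prV (DirectSum.lof R ℕ (fun k => DvE R V k) k
              (algebraMap ℚ R ((-1 : ℚ) ^ k / ((r + ℓ : ℕ) : ℚ)) •
                TensorProduct.map LinearMap.id (kInner ρΛ) (x ⊗ₜ[R] (φ ⊗ₜ[R] ξ))))
            = (algebraMap ℚ R ((-1 : ℚ) ^ k / ((r + ℓ : ℕ) : ℚ)) * (-1 : R) ^ k) •
              DirectSum.lof R ℕ (fun k => DvE R V k) k
                (x ⊗ₜ[R] (ceD Δ.toLinearMap prV (kInner ρΛ (φ ⊗ₜ[R] ξ)))) := by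
          rw [map_smul, map_smul, horizTot_lof, hmapK, hmapD, hzsE, map_smul, smul_smul]
        have hterm2 : κ (horizTot Δ.toLinearMap prV (DirectSum.lof R ℕ (fun k => DvE R V k) k
              (x ⊗ₜ[R] (φ ⊗ₜ[R] ξ))))
            = ((-1 : R) ^ k * algebraMap ℚ R ((-1 : ℚ) ^ k / ((r + ℓ : ℕ) : ℚ))) •
              DirectSum.lof R ℕ (fun k => DvE R V k) k
                (x ⊗ₜ[R] (kInner ρΛ (ceD Δ.toLinearMap prV (φ ⊗ₜ[R] ξ)))) := by
          rw [horizTot_lof, hmapD, hzsE, map_smul, map_smul, hDw, smul_smul]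
        rw [hterm1, hterm2, mul_comm
          (algebraMap ℚ R ((-1 : ℚ) ^ k / ((r + ℓ : ℕ) : ℚ))) ((-1 : R) ^ k)]
        rw [← smul_add, ← map_add, ← TensorProduct.tmul_add]
        rw [core_homotopy Δ ε prV ρΛ hΔ hε hprV1 hprV0 hρΛ1 hρΛ (r + ℓ) r ℓ rfl hw]
        rw [← Nat.cast_smul_eq_nsmul R, TensorProduct.tmul_smul, map_smul, smul_smul]
        have hfin : (-1 : R) ^ k * algebraMap ℚ R ((-1 : ℚ) ^ k / ((r + ℓ : ℕ) : ℚ))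
            * ((r + ℓ : ℕ) : R) = 1 := by
          have e1 : ((-1 : R) ^ k) = algebraMap ℚ R ((-1 : ℚ) ^ k) := by
            rw [map_pow, map_neg, map_one]
          have e2 : (((r + ℓ : ℕ)) : R) = algebraMap ℚ R (((r + ℓ : ℕ)) : ℚ) := by
            rw [map_natCast]
          rw [e1, e2, ← map_mul, ← map_mul, ← map_one (algebraMap ℚ R)]
          congr 1
          have hne : (((r + ℓ : ℕ)) : ℚ) ≠ 0 := Nat.cast_ne_zero.mpr h0
          field_simp
          rw [← pow_mul, pow_mul', neg_one_sq, one_pow]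
        rw [hfin, one_smul]
  · -- κ ∘ κ = 0
    refine DvE_induction ?_ ?_ ?_
    · simp
    · intro a b ha hb; simp only [map_add, ha, hb, add_zero]
    · intro k r ℓ x φ ξ hφ hξ
      have hw : φ ⊗ₜ[R] ξ ∈ (Wrl r ℓ : Submodule R _) := tmul_mem_Wrl hφ hξ
      rw [hκ k r ℓ x φ ξ hφ hξ]
      by_cases h0 : r + ℓ = 0
      · rw [if_pos h0, map_zero]
      · rw [if_neg h0, map_smul, map_smul, hmapK]
        cases ℓ with
        | zero =>
          rw [K_zero_of_Wrl0 ρΛ hρΛ1 hw, TensorProduct.tmul_zero, map_zero, map_zero, smul_zero]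
        | succ m =>
          have hmem := K_mem ρΛ hρΛ1 hρΛ m (r := r) hw
          have hval := kappa_W ρΛ κ hκ k (r + 1) m x hmem
          rw [if_neg (by omega)] at hval
          rw [hval, hmapK, KK_zero ρΛ hρΛ1 hρΛ (m + 1) hw, TensorProduct.tmul_zero,
            smul_zero, map_zero, smul_zero]
  · -- q ∘ κ = 0
    refine DvE_induction ?_ ?_ ?_
    · simp
    · intro a b ha hb; simp only [map_add, ha, hb, add_zero]
    · intro k r ℓ x φ ξ hφ hξ
      have hw : φ ⊗ₜ[R] ξ ∈ (Wrl r ℓ : Submodule R _) := tmul_mem_Wrl hφ hξ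
      rw [hκ k r ℓ x φ ξ hφ hξ]
      by_cases h0 : r + ℓ = 0
      · rw [if_pos h0, map_zero]
      · rw [if_neg h0, map_smul, map_smul, hmapK]
        cases ℓ with
        | zero =>
          rw [K_zero_of_Wrl0 ρΛ hρΛ1 hw, TensorProduct.tmul_zero, map_zero, map_zero, smul_zero]
        | succ m =>
          have hmem := K_mem ρΛ hρΛ1 hρΛ m (r := r) hw
          rw [q_lof_W ε hε k r m x hmem, smul_zero]
  · -- κ ∘ j = 0
    intro y
    induction y using DirectSum.induction_on with
    | zero => simp
    | add a b ha hb => simp only [map_add, ha, hb, add_zero]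
    | of k X =>
      rw [← DirectSum.lof_eq_of R, jAug_lof,
        hκ k 0 0 X 1 1 one_mem_P0 one_mem_Q0, if_pos rfl]
end

section
/- Homological perturbation lemma: let (C•, d_C) and (D•, d_D) be cochain complexes of R-modules with chain maps i : C → D, p : D → C and a homotopy h : D• → D^{•−1} satisfying h d_D + d_D h = id − i p. Let b : D• → D^{•+1} be a perturbation, i.e. (d_D + b)² = 0, such that id + b h is invertible. Then with D_C := d_C + p (id + b h)⁻¹ b i, I := (id + h b)⁻¹ i, P := p (id + b h)⁻¹, and H := (id + h b)⁻¹ h, one has: D_C² = 0, I and P are chain maps between (C, D_C) and (D, d_D + b), and H(d_D + b) + (d_D + b)H = id − I P. -/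
set_option maxHeartbeats 1000000 in
/-- **Homological perturbation lemma.**
Complexes are indexed by `ℕ`; a homotopy retract `(i, p, h)` with `h` of degree `-1`
(vanishing implicitly in degree `-1`, whence the separate degree-`0` identity), together
with a perturbation `b` of the differential on `D` such that `id + b∘h` (equivalently
`id + h∘b`) is invertible, with two-sided inverses `g` (for `id + b∘h`, reindexed so that
`g (n+1)` inverts `id + b n ∘ h n` and `g 0 = id`) and `w n` (for `id + h n ∘ b n`).
Then the perturbed data `D_C = d_C + p (id+bh)⁻¹ b i`, `I = (id+hb)⁻¹ i`,
`P = p (id+bh)⁻¹`, `H = (id+hb)⁻¹ h` again form a homotopy retract: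
`D_C² = 0`, `I`, `P` are chain maps, and `H` is a homotopy with
`H(d_D+b) + (d_D+b)H = id − I P`. -/
theorem homological_perturbation_lemma
    {R : Type*} [CommRing R]
    {C D : ℕ → Type*}
    [∀ n, AddCommGroup (C n)] [∀ n, Module R (C n)]
    [∀ n, AddCommGroup (D n)] [∀ n, Module R (D n)]
    (dC : ∀ n, C n →ₗ[R] C (n + 1)) (dD : ∀ n, D n →ₗ[R] D (n + 1))
    (hdC : ∀ n, dC (n + 1) ∘ₗ dC n = 0) (hdD : ∀ n, dD (n + 1) ∘ₗ dD n = 0)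
    (i : ∀ n, C n →ₗ[R] D n) (p : ∀ n, D n →ₗ[R] C n)
    (hi : ∀ n, dD n ∘ₗ i n = i (n + 1) ∘ₗ dC n)
    (hp : ∀ n, dC n ∘ₗ p n = p (n + 1) ∘ₗ dD n)
    (h : ∀ n, D (n + 1) →ₗ[R] D n)
    (hh : ∀ n, h (n + 1) ∘ₗ dD (n + 1) + dD n ∘ₗ h n
      = LinearMap.id - i (n + 1) ∘ₗ p (n + 1))
    (hh0 : h 0 ∘ₗ dD 0 = LinearMap.id - i 0 ∘ₗ p 0)
    -- the perturbation
    (b : ∀ n, D n →ₗ[R] D (n + 1))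
    (hb : ∀ n, (dD (n + 1) + b (n + 1)) ∘ₗ (dD n + b n) = 0)
    -- `g` is the inverse of `id + b h`
    (g : ∀ n, D n →ₗ[R] D n)
    (hg0 : g 0 = LinearMap.id)
    (hg : ∀ n, g (n + 1) ∘ₗ (LinearMap.id + b n ∘ₗ h n) = LinearMap.id)
    (hg' : ∀ n, (LinearMap.id + b n ∘ₗ h n) ∘ₗ g (n + 1) = LinearMap.id)
    -- `w` is the inverse of `id + h b`
    (w : ∀ n, D n →ₗ[R] D n)
    (hw : ∀ n, w n ∘ₗ (LinearMap.id + h n ∘ₗ b n) = LinearMap.id)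
    (hw' : ∀ n, (LinearMap.id + h n ∘ₗ b n) ∘ₗ w n = LinearMap.id) :
    -- `D_C` squares to zero
    (∀ n, (dC (n + 1) + p (n + 2) ∘ₗ g (n + 2) ∘ₗ b (n + 1) ∘ₗ i (n + 1))
        ∘ₗ (dC n + p (n + 1) ∘ₗ g (n + 1) ∘ₗ b n ∘ₗ i n) = 0) ∧
    -- `I := (id + h b)⁻¹ i` is a chain map
    (∀ n, (dD n + b n) ∘ₗ (w n ∘ₗ i n)
        = (w (n + 1) ∘ₗ i (n + 1)) ∘ₗ (dC n + p (n + 1) ∘ₗ g (n + 1) ∘ₗ b n ∘ₗ i n)) ∧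
    -- `P := p (id + b h)⁻¹` is a chain map
    (∀ n, (dC n + p (n + 1) ∘ₗ g (n + 1) ∘ₗ b n ∘ₗ i n) ∘ₗ (p n ∘ₗ g n)
        = (p (n + 1) ∘ₗ g (n + 1)) ∘ₗ (dD n + b n)) ∧
    -- `H := (id + h b)⁻¹ h` is a homotopy between `id` and `I P`
    (∀ n, (w (n + 1) ∘ₗ h (n + 1)) ∘ₗ (dD (n + 1) + b (n + 1))
        + (dD n + b n) ∘ₗ (w n ∘ₗ h n)
        = LinearMap.id - (w (n + 1) ∘ₗ i (n + 1)) ∘ₗ (p (n + 1) ∘ₗ g (n + 1))) ∧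
    ((w 0 ∘ₗ h 0) ∘ₗ (dD 0 + b 0)
        = LinearMap.id - (w 0 ∘ₗ i 0) ∘ₗ (p 0 ∘ₗ g 0)) := by
  classical
  -- pointwise versions of the hypotheses
  have idd : ∀ n (x : D n), dD (n+1) (dD n x) = 0 := by
    intro n x
    have H := DFunLike.congr_fun (hdD n) x
    simpa using H
  have icc : ∀ n (x : C n), dC (n+1) (dC n x) = 0 := by
    intro n x
    have H := DFunLike.congr_fun (hdC n) x
    simpa using H
  have iF2 : ∀ n (x : C n), i (n+1) (dC n x) = dD n (i n x) := by
    intro n x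
    have H := DFunLike.congr_fun (hi n) x
    simpa using H.symm
  have iF3 : ∀ n (x : D n), dC n (p n x) = p (n+1) (dD n x) := by
    intro n x
    have H := DFunLike.congr_fun (hp n) x
    simpa using H
  have ihh : ∀ n (x : D (n+1)), i (n+1) (p (n+1) x)
      = x - h (n+1) (dD (n+1) x) - dD n (h n x) := by
    intro n x
    have H := DFunLike.congr_fun (hh n) x
    simp only [LinearMap.add_apply, LinearMap.comp_apply, LinearMap.sub_apply,
      LinearMap.id_apply] at H
    have H0 := sub_eq_zero.mpr H
    rw [← sub_eq_zero, ← H0]; abel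
  have ihh0 : ∀ x : D 0, i 0 (p 0 x) = x - h 0 (dD 0 x) := by
    intro x
    have H := DFunLike.congr_fun hh0 x
    simp only [LinearMap.comp_apply, LinearMap.sub_apply, LinearMap.id_apply] at H
    have H0 := sub_eq_zero.mpr H
    rw [← sub_eq_zero, ← H0]; abel
  have ibb : ∀ n (x : D n), dD (n+1) (b n x)
      = -b (n+1) (b n x) - b (n+1) (dD n x) := by
    intro n x
    have H := DFunLike.congr_fun (hb n) x
    simp only [LinearMap.add_apply, LinearMap.comp_apply, LinearMap.zero_apply,
      map_add, idd n x, zero_add] at H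
    have H0 := sub_eq_zero.mpr H
    rw [← sub_eq_zero, ← H0]; abel
  -- pointwise inverse identities
  have e4 : ∀ n (x : D n), h n (b n (w n x)) = x - w n x := by
    intro n x
    have H := DFunLike.congr_fun (hw' n) x
    simp only [LinearMap.add_apply, LinearMap.comp_apply, LinearMap.id_apply] at H
    have H0 := sub_eq_zero.mpr H
    rw [← sub_eq_zero, ← H0]; abel
  have e5 : ∀ n (x : D n), w n (h n (b n x)) = x - w n x := by
    intro n x
    have H := DFunLike.congr_fun (hw n) x
    simp only [LinearMap.add_apply, LinearMap.comp_apply, LinearMap.id_apply,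
      map_add] at H
    have H0 := sub_eq_zero.mpr H
    rw [← sub_eq_zero, ← H0]; abel
  have e1 : ∀ n (x : D n), g (n+1) (b n x) = b n (w n x) := by
    intro n x
    have h2 := DFunLike.congr_fun (hg n) (b n (w n x))
    have h3 := DFunLike.congr_fun (hw' n) x
    simp only [LinearMap.add_apply, LinearMap.comp_apply, LinearMap.id_apply] at h2 h3
    calc g (n+1) (b n x) = g (n+1) (b n (w n x + h n (b n (w n x)))) := by rw [h3]
      _ = b n (w n x) := by rw [map_add]; exact h2
  have e2 : ∀ n (x : D (n+1)), h n (g (n+1) x) = w n (h n x) := by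
    intro n x
    have h2 := DFunLike.congr_fun (hw n) (h n (g (n+1) x))
    have h3 := DFunLike.congr_fun (hg' n) x
    simp only [LinearMap.add_apply, LinearMap.comp_apply, LinearMap.id_apply] at h2 h3
    calc h n (g (n+1) x)
        = w n (h n (g (n+1) x) + h n (b n (h n (g (n+1) x)))) := h2.symm
      _ = w n (h n (g (n+1) x + b n (h n (g (n+1) x)))) := by rw [map_add (h n)]
      _ = w n (h n x) := by rw [h3]
  have sub_g : ∀ n (x : D (n+1)), g (n+1) x = x - b n (w n (h n x)) := by
    intro n x
    have h3 := DFunLike.congr_fun (hg' n) x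
    simp only [LinearMap.add_apply, LinearMap.comp_apply, LinearMap.id_apply] at h3
    rw [e2 n x] at h3
    exact eq_sub_of_add_eq h3
  refine ⟨?_, ?_, ?_, ?_, ?_⟩
  · intro n
    have key : (dC (n + 1) + p (n+1+1) ∘ₗ g (n+1+1) ∘ₗ b (n + 1) ∘ₗ i (n + 1))
        ∘ₗ (dC n + p (n + 1) ∘ₗ g (n + 1) ∘ₗ b n ∘ₗ i n) = 0 := by
      apply LinearMap.ext; intro x
      simp only [LinearMap.add_apply, LinearMap.comp_apply, LinearMap.zero_apply]
      simp only [iF3 n, iF3 (n+1), iF2 n, ihh n, sub_g n, sub_g (n+1), e4 n, e4 (n+1),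
        e5 n, e5 (n+1), ibb n, idd n, icc n, e1 n, e1 (n+1), e2 n, e2 (n+1),
        map_add, map_sub, map_neg, map_zero]
      abel
    exact key
  · intro n
    apply LinearMap.ext; intro x
    simp only [LinearMap.add_apply, LinearMap.comp_apply]
    simp only [iF3 n, iF2 n, ihh n, sub_g n, sub_g (n+1), e4 n, e4 (n+1),
      e5 n, e5 (n+1), ibb n, idd n, e1 n, e1 (n+1), e2 n, e2 (n+1),
      map_add, map_sub, map_neg, map_zero]
    abel
  · intro n
    match n with
    | 0 =>
      rw [hg0, LinearMap.comp_id]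
      apply LinearMap.ext; intro x
      simp only [LinearMap.add_apply, LinearMap.comp_apply]
      simp only [iF3 0, iF3 1, iF2 0, ihh0, ihh 0, sub_g 0, sub_g 1, e4 0, e4 1,
        e5 0, e5 1, ibb 0, idd 0, e1 0, e1 1, e2 0, e2 1,
        map_add, map_sub, map_neg, map_zero]
      abel
    | (m+1) =>
      apply LinearMap.ext; intro x
      simp only [LinearMap.add_apply, LinearMap.comp_apply]
      simp only [iF3 m, iF3 (m+1), iF3 (m+1+1), iF2 m, iF2 (m+1), ihh m, ihh (m+1),
        sub_g m, sub_g (m+1), e4 m, e4 (m+1), e5 m, e5 (m+1), ibb m, ibb (m+1),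
        idd m, idd (m+1), e1 m, e1 (m+1), e2 m, e2 (m+1),
        map_add, map_sub, map_neg, map_zero]
      abel
  · intro n
    have key : (w (n + 1) ∘ₗ h (n + 1)) ∘ₗ (dD (n + 1) + b (n + 1))
        + (dD n + b n) ∘ₗ (w n ∘ₗ h n)
        = LinearMap.id - (w (n + 1) ∘ₗ i (n + 1)) ∘ₗ (p (n + 1) ∘ₗ g (n + 1)) := by
      apply LinearMap.ext; intro x
      simp only [LinearMap.add_apply, LinearMap.comp_apply, LinearMap.sub_apply,
        LinearMap.id_apply]
      simp only [iF3 n, iF3 (n+1), iF2 n, ihh n, sub_g n, sub_g (n+1), e4 n, e4 (n+1),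
        e5 n, e5 (n+1), ibb n, idd n, e1 n, e1 (n+1), e2 n, e2 (n+1),
        map_add, map_sub, map_neg, map_zero]
      abel
    exact key
  · rw [hg0, LinearMap.comp_id]
    apply LinearMap.ext; intro x
    simp only [LinearMap.add_apply, LinearMap.comp_apply, LinearMap.sub_apply,
      LinearMap.id_apply]
    simp only [iF3 0, iF2 0, ihh0, ihh 0, sub_g 0, e4 0, e5 0, ibb 0, idd 0,
      e1 0, e2 0, map_add, map_sub, map_neg, map_zero]
    abel
end
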